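/- arXiv:2504.02430 — 5 statements merged into one kernel-verified Lean document; each statement's English description precedes it below -/
import Mathlib

section
/- If a production inference relation is generated by a consistent binary semantics (every bimodel (Φ,Ψ) satisfies Φ ⊆ Ψ), then it satisfies the Cut rule: if φ ⇒ ψ and φ ∧ ψ ⇒ ρ, then φ ⇒ ρ. -/
/-- Propositional formulas over an alphabet `α`. -/
inductive Form (α : Type) : Type where
  | atom : α → Form α
  | tru : Form α
  | fls : Form α
  | neg : Form α → Form α
  | conj : Form α → Form α → Form α
  | disj : Form α → Form α → Form α

variable {α : Type}

/-- Truth-value of a formula in a world (truth assignment). -/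
def Form.eval (v : α → Bool) : Form α → Bool
  | .atom a => v a
  | .tru => true
  | .fls => false
  | .neg φ => !φ.eval v
  | .conj φ ψ => φ.eval v && ψ.eval v
  | .disj φ ψ => φ.eval v || ψ.eval v

/-- Material implication. -/
def Form.impl (φ ψ : Form α) : Form α := .disj (.neg φ) ψ

/-- Biconditional. -/
def Form.iff (φ ψ : Form α) : Form α := .conj (φ.impl ψ) (ψ.impl φ)

/-- Classical (semantic) entailment, `Φ ⊢ ψ`. -/
def Entails (Φ : Set (Form α)) (ψ : Form α) : Prop :=
  ∀ v : α → Bool, (∀ φ ∈ Φ, φ.eval v = true) → ψ.eval v = true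

/-- Conjunction of a finite list of formulas. -/
def conjList (L : List (Form α)) : Form α := L.foldr .conj .tru

/-- Disjunction of a finite list of formulas. -/
def disjList (L : List (Form α)) : Form α := L.foldr .disj .fls

/-- Literals: an atom together with a polarity. -/
def litForm (l : α × Bool) : Form α := if l.2 then .atom l.1 else .neg (.atom l.1)

/-- The set of formulas true in a world: a world viewed as a maximal
deductively closed consistent set of formulas. -/
def worldSet (v : α → Bool) : Set (Form α) := {φ : Form α | φ.eval v = true}

/-- A set of formulas closed under semantic entailment. -/
def DeductivelyClosed (S : Set (Form α)) : Prop := ∀ ψ : Form α, Entails S ψ → ψ ∈ S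

/-- A (semantically) consistent set of formulas. -/
def ConsistentSet (S : Set (Form α)) : Prop := ∃ v : α → Bool, ∀ φ ∈ S, φ.eval v = true

/-- A bimodel: a pair of consistent, deductively closed sets of formulas. -/
def IsBimodel (p : Set (Form α) × Set (Form α)) : Prop :=
  ConsistentSet p.1 ∧ DeductivelyClosed p.1 ∧ ConsistentSet p.2 ∧ DeductivelyClosed p.2

/-- The relation generated by a binary semantics `B`. -/
def GenRel (B : Set (Set (Form α) × Set (Form α))) (φ ψ : Form α) : Prop :=
  ∀ p ∈ B, φ ∈ p.2 → ψ ∈ p.1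

/-- if a production inference relation is generated by a *consistent*
binary semantics (each bimodel `(Φ, Ψ)` satisfies `Φ ⊆ Ψ`), then it satisfies Cut:
`φ ⇒ ψ` and `φ ∧ ψ ⇒ ρ` imply `φ ⇒ ρ`. -/
theorem consistent_binarySemantics_cut {α : Type}
    (B : Set (Set (Form α) × Set (Form α))) (hB : ∀ p ∈ B, IsBimodel p)
    (hConsistent : ∀ p ∈ B, p.1 ⊆ p.2) :
    ∀ φ ψ ρ : Form α, GenRel B φ ψ → GenRel B (φ.conj ψ) ρ → GenRel B φ ρ := by
  intro φ ψ ρ h1 h2 p hp hφ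
  obtain ⟨_, _, _, hdc2⟩ := hB p hp
  have hψ : ψ ∈ p.2 := hConsistent p hp (h1 p hp hφ)
  have hconj : φ.conj ψ ∈ p.2 := hdc2 _ (fun v hv => by
    simp [Form.eval, hv φ hφ, hv ψ hψ])
  exact h2 p hp hconj
end

section
/- A world ω (a truth assignment on a finite propositional alphabet) is a causal world of a determinate causal theory Δ (i.e., ω is an exact theory of the production inference relation generated by Δ) if and only if ω is a model of the completion of Δ, where the completion consists of all formulas l ↔ ⋁{φ : (φ ⇒ l) ∈ Δ} for each literal l (and ⊥). -/
variable {α : Type}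

/-- The smallest causal production inference relation containing the causal theory `Δ`:
closed under Strengthening, Weakening, And, Truth/Falsity, Cut and Or. -/
inductive Derives (Δ : Set (Form α × Form α)) : Form α → Form α → Prop where
  | base {φ ψ} : (φ, ψ) ∈ Δ → Derives Δ φ ψ
  | strengthening {φ ψ ρ} : Entails {φ} ψ → Derives Δ ψ ρ → Derives Δ φ ρ
  | weakening {φ ψ ρ} : Derives Δ φ ψ → Entails {ψ} ρ → Derives Δ φ ρ
  | and {φ ψ ρ} : Derives Δ φ ψ → Derives Δ φ ρ → Derives Δ φ (ψ.conj ρ)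
  | top : Derives Δ .tru .tru
  | bot : Derives Δ .fls .fls
  | cut {φ ψ ρ} : Derives Δ φ ψ → Derives Δ (φ.conj ψ) ρ → Derives Δ φ ρ
  | or {φ ψ ρ} : Derives Δ φ ρ → Derives Δ ψ ρ → Derives Δ (φ.disj ψ) ρ

/-- The consequence operator `C` of the causal production inference relation
generated by `Δ`: `ψ ∈ C(Φ)` iff a finite conjunction from `Φ` produces `ψ`. -/
def Cons (Δ : Set (Form α × Form α)) (Φ : Set (Form α)) : Set (Form α) :=
  {ψ | ∃ L : List (Form α), (∀ φ ∈ L, φ ∈ Φ) ∧ Derives Δ (conjList L) ψ}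

/-- A literal causal rule `b₁ ∧ ... ∧ bₙ ⇒ l`: the body is a list of literals, the head
is a literal (`some l`) or `⊥` (`none`, a constraint). -/
structure LitRule (α : Type) where
  body : List (α × Bool)
  head : Option (α × Bool)

/-- The body of a rule as a formula. -/
def LitRule.bodyForm (r : LitRule α) : Form α := conjList (r.body.map litForm)

/-- The head of a rule as a formula (`⊥` for constraints). -/
def LitRule.headForm (r : LitRule α) : Form α :=
  match r.head with
  | some l => litForm l
  | none => .fls

/-- A rule as a pair (cause, effect). -/
def LitRule.pair (r : LitRule α) : Form α × Form α := (r.bodyForm, r.headForm)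

/-- The set of causal rules of a determinate causal theory, given as a list. -/
def theoryPairs (Δ : List (LitRule α)) : Set (Form α × Form α) :=
  {p | ∃ r ∈ Δ, p = r.pair}

/-- `v` is a causal world of `Δ`: the world, viewed as a deductively closed set of
formulas, is an exact theory of the production inference relation generated by `Δ`. -/
def CausalWorldOf (Δ : List (LitRule α)) (v : α → Bool) : Prop :=
  Cons (theoryPairs Δ) (worldSet v) = worldSet v

variable [DecidableEq α]

/-- The disjunction of the bodies of all rules of `Δ` with head `h`. -/
def headDisj (Δ : List (LitRule α)) (h : Option (α × Bool)) : Form α :=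
  disjList ((Δ.filter (fun r => r.head = h)).map LitRule.bodyForm)

/-- `v` models the completion of `Δ`: it satisfies `l ↔ ⋁{φ : (φ ⇒ l) ∈ Δ}` for every
literal `l`, and `⊥ ↔ ⋁{φ : (φ ⇒ ⊥) ∈ Δ}` for the constraints. -/
def ModelsCompletion (Δ : List (LitRule α)) (v : α → Bool) : Prop :=
  (∀ l : α × Bool, ((litForm l).iff (headDisj Δ (some l))).eval v = true) ∧
    ((Form.fls.iff (headDisj Δ none)).eval v = true)

section AuxLemmas

variable {α : Type}

/-- Atoms occurring in a formula. -/
def Form.atoms : Form α → List α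
  | .atom a => [a]
  | .tru => []
  | .fls => []
  | .neg φ => φ.atoms
  | .conj φ ψ => φ.atoms ++ ψ.atoms
  | .disj φ ψ => φ.atoms ++ ψ.atoms

lemma eval_agree {v w : α → Bool} (φ : Form α) (h : ∀ a ∈ φ.atoms, w a = v a) :
    φ.eval w = φ.eval v := by
  induction φ with
  | atom a => exact h a (by simp [Form.atoms])
  | tru => rfl
  | fls => rfl
  | neg φ ih => simp only [Form.eval]; rw [ih h]
  | conj φ ψ ih1 ih2 =>
      simp only [Form.eval]
      rw [ih1 (fun a ha => h a (by simp [Form.atoms, ha])),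
        ih2 (fun a ha => h a (by simp [Form.atoms, ha]))]
  | disj φ ψ ih1 ih2 =>
      simp only [Form.eval]
      rw [ih1 (fun a ha => h a (by simp [Form.atoms, ha])),
        ih2 (fun a ha => h a (by simp [Form.atoms, ha]))]

lemma conjList_eval (v : α → Bool) (L : List (Form α)) :
    (conjList L).eval v = true ↔ ∀ φ ∈ L, φ.eval v = true := by
  induction L with
  | nil => simp [conjList, Form.eval]
  | cons a L ih =>
      simp only [conjList, List.foldr_cons, Form.eval, Bool.and_eq_true, List.mem_cons]
      constructor
      · rintro ⟨h1, h2⟩ φ (rfl | hφ)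
        · exact h1
        · exact (ih.mp h2) φ hφ
      · intro h
        exact ⟨h a (Or.inl rfl), ih.mpr (fun φ hφ => h φ (Or.inr hφ))⟩

lemma disjList_eval (v : α → Bool) (L : List (Form α)) :
    (disjList L).eval v = true ↔ ∃ φ ∈ L, φ.eval v = true := by
  induction L with
  | nil => simp [disjList, Form.eval]
  | cons a L ih =>
      simp only [disjList, List.foldr_cons, Form.eval, Bool.or_eq_true, List.mem_cons]
      constructor
      · rintro (h1 | h2)
        · exact ⟨a, Or.inl rfl, h1⟩
        · obtain ⟨φ, h, h'⟩ := ih.mp h2; exact ⟨φ, Or.inr h, h'⟩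
      · rintro ⟨φ, (rfl | hφ), h'⟩
        · exact Or.inl h'
        · exact Or.inr (ih.mpr ⟨φ, hφ, h'⟩)

lemma iff_eval (v : α → Bool) (φ ψ : Form α) :
    (φ.iff ψ).eval v = true ↔ φ.eval v = ψ.eval v := by
  simp only [Form.iff, Form.impl, Form.eval]
  cases hφ : φ.eval v <;> cases hψ : ψ.eval v <;> simp

lemma litForm_eval (v : α → Bool) (l : α × Bool) :
    (litForm l).eval v = true ↔ v l.1 = l.2 := by
  rcases l with ⟨a, b⟩
  cases b <;> simp [litForm, Form.eval]

lemma headDisj_eval [DecidableEq α] (Δ : List (LitRule α)) (v : α → Bool)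
    (h : Option (α × Bool)) :
    (headDisj Δ h).eval v = true ↔
      ∃ r ∈ Δ, r.head = h ∧ r.bodyForm.eval v = true := by
  simp only [headDisj, disjList_eval, List.mem_map, List.mem_filter, decide_eq_true_eq]
  constructor
  · rintro ⟨φ, ⟨r, ⟨hr, hh⟩, rfl⟩, hev⟩
    exact ⟨r, hr, hh, hev⟩
  · rintro ⟨r, hr, hh, hev⟩
    exact ⟨r.bodyForm, ⟨r, ⟨hr, hh⟩, rfl⟩, hev⟩

lemma entails_mem {L : List (Form α)} {φ : Form α} (h : φ ∈ L) :
    Entails {conjList L} φ := by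
  intro w hw
  have := hw (conjList L) rfl
  exact (conjList_eval w L).mp this φ h

lemma derives_conjList {Δp : Set (Form α × Form α)} {φ : Form α} :
    ∀ {M : List (Form α)}, (∀ ψ ∈ M, Derives Δp φ ψ) → Derives Δp φ (conjList M) := by
  intro M
  induction M with
  | nil =>
      intro _
      exact Derives.strengthening (show Entails {φ} Form.tru from fun w _ => rfl) Derives.top
  | cons a M ih =>
      intro h
      exact Derives.and (h a (by simp)) (ih (fun ψ hψ => h ψ (by simp [hψ])))

lemma derives_mem_cons {Δp : Set (Form α × Form α)} {v : α → Bool} {φ ψ : Form α}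
    (hd : Derives Δp φ ψ) (hφ : φ.eval v = true) : ψ ∈ Cons Δp (worldSet v) := by
  refine ⟨[φ], ?_, ?_⟩
  · intro χ hχ
    simp only [List.mem_singleton] at hχ
    subst hχ
    exact hφ
  · exact Derives.strengthening (entails_mem (by simp)) hd

/-- Soundness of derivations at a model of the completion. -/
lemma derives_sound [DecidableEq α] {Δ : List (LitRule α)} {v : α → Bool}
    (hc : ModelsCompletion Δ v) {φ ψ : Form α}
    (hd : Derives (theoryPairs Δ) φ ψ) : φ.eval v = true → ψ.eval v = true := by
  induction hd with
  | base h =>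
      intro hφ
      obtain ⟨r, hr, heq⟩ := h
      have hb : r.bodyForm.eval v = true := by
        have := congrArg Prod.fst heq
        simp only [LitRule.pair] at this
        rw [this] at hφ; exact hφ
      have hhead : r.headForm.eval v = true := by
        cases hh : r.head with
        | none =>
            exfalso
            have h2 := hc.2
            rw [iff_eval] at h2
            have : (headDisj Δ none).eval v = true :=
              (headDisj_eval Δ v none).mpr ⟨r, hr, hh, hb⟩
            rw [this] at h2
            simp [Form.eval] at h2
        | some l =>
            have h1 := hc.1 l
            rw [iff_eval] at h1
            have : (headDisj Δ (some l)).eval v = true :=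
              (headDisj_eval Δ v (some l)).mpr ⟨r, hr, hh, hb⟩
            rw [this] at h1
            simpa [LitRule.headForm, hh] using h1
      have := congrArg Prod.snd heq
      simp only [LitRule.pair] at this
      rw [this]; exact hhead
  | strengthening he _ ih =>
      intro hφ
      exact ih (he v (by intro χ hχ; rw [Set.mem_singleton_iff] at hχ; subst hχ; exact hφ))
  | weakening _ he ih =>
      intro hφ
      exact he v (by intro χ hχ; rw [Set.mem_singleton_iff] at hχ; subst hχ; exact ih hφ)
  | and _ _ ih1 ih2 =>
      intro hφ
      simp only [Form.eval, Bool.and_eq_true]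
      exact ⟨ih1 hφ, ih2 hφ⟩
  | top => intro h; exact h
  | bot => intro h; exact h
  | cut _ _ ih1 ih2 =>
      intro hφ
      exact ih2 (by simp only [Form.eval, Bool.and_eq_true]; exact ⟨hφ, ih1 hφ⟩)
  | or _ _ ih1 ih2 =>
      intro hφ
      simp only [Form.eval, Bool.or_eq_true] at hφ
      rcases hφ with h | h
      · exact ih1 h
      · exact ih2 h

end AuxLemmas
section MainLemmas

variable {α : Type}

/-- Key invariant: at a world `v` closed under `Cons`, any derivation whose antecedent
holds at `v` yields a consequent entailed by the heads of rules whose bodies hold at `v`. -/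
lemma derives_heads [DecidableEq α] {Δ : List (LitRule α)} {v : α → Bool}
    (hsub : ∀ ψ, ψ ∈ Cons (theoryPairs Δ) (worldSet v) → ψ.eval v = true)
    {φ ψ : Form α} (hd : Derives (theoryPairs Δ) φ ψ) :
    φ.eval v = true →
      ∀ w : α → Bool,
        (∀ r ∈ Δ, r.bodyForm.eval v = true → r.headForm.eval w = true) →
          ψ.eval w = true := by
  induction hd with
  | base h =>
      intro hφ w hw
      obtain ⟨r, hr, heq⟩ := h
      have h1 := congrArg Prod.fst heq
      have h2 := congrArg Prod.snd heq
      simp only [LitRule.pair] at h1 h2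
      rw [h2]
      exact hw r hr (by rw [← h1]; exact hφ)
  | strengthening he hd' ih =>
      intro hφ w hw
      exact ih (he v (by intro χ hχ; rw [Set.mem_singleton_iff] at hχ; subst hχ; exact hφ)) w hw
  | weakening hd' he ih =>
      intro hφ w hw
      exact he w (by intro χ hχ; rw [Set.mem_singleton_iff] at hχ; subst hχ; exact ih hφ w hw)
  | and _ _ ih1 ih2 =>
      intro hφ w hw
      simp only [Form.eval, Bool.and_eq_true]
      exact ⟨ih1 hφ w hw, ih2 hφ w hw⟩
  | top => intro _ w _; rfl
  | bot => intro h _ _; exact absurd h (by simp [Form.eval])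
  | @cut φ' ψ' ρ' hd1 hd2 ih1 ih2 =>
      intro hφ w hw
      have hψv : ψ'.eval v = true := hsub ψ' (derives_mem_cons hd1 hφ)
      exact ih2 (by simp only [Form.eval, Bool.and_eq_true]; exact ⟨hφ, hψv⟩) w hw
  | or _ _ ih1 ih2 =>
      intro hφ w hw
      simp only [Form.eval, Bool.or_eq_true] at hφ
      rcases hφ with h | h
      · exact ih1 h w hw
      · exact ih2 h w hw

lemma exists_bodies [DecidableEq α] {Δ : List (LitRule α)} {v : α → Bool} :
    ∀ A : List α,
      (∀ a ∈ A, ∃ r ∈ Δ, r.head = some (a, v a) ∧ r.bodyForm.eval v = true) →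
        ∃ L : List (Form α), (∀ φ ∈ L, φ.eval v = true) ∧
          ∀ a ∈ A, ∃ r ∈ Δ, r.head = some (a, v a) ∧ r.bodyForm ∈ L := by
  intro A
  induction A with
  | nil => intro _; exact ⟨[], by simp, by simp⟩
  | cons a A ih =>
      intro h
      obtain ⟨L, hL1, hL2⟩ := ih (fun b hb => h b (by simp [hb]))
      obtain ⟨r, hr, hh, hb⟩ := h a (by simp)
      refine ⟨r.bodyForm :: L, ?_, ?_⟩
      · intro φ hφ
        rcases List.mem_cons.mp hφ with rfl | hφ
        · exact hb
        · exact hL1 φ hφ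
      · intro b hb'
        rcases List.mem_cons.mp hb' with rfl | hb'
        · exact ⟨r, hr, hh, by simp⟩
        · obtain ⟨r', h1, h2, h3⟩ := hL2 b hb'
          exact ⟨r', h1, h2, by simp [h3]⟩

end MainLemmas
/-- a world is a causal world of a determinate causal theory `Δ` if and
only if it is a model of the completion of `Δ`. -/
theorem causalWorld_iff_completion {α : Type} [DecidableEq α]
    (Δ : List (LitRule α)) (v : α → Bool) :
    CausalWorldOf Δ v ↔ ModelsCompletion Δ v := by
  constructor
  · intro hCW
    have hCW' : Cons (theoryPairs Δ) (worldSet v) = worldSet v := hCW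
    have hsub : ∀ ψ, ψ ∈ Cons (theoryPairs Δ) (worldSet v) → ψ.eval v = true := by
      intro ψ hψ
      rw [hCW'] at hψ
      exact hψ
    constructor
    · intro l
      rw [iff_eval]
      by_cases hl : (litForm l).eval v = true
      · have hmem : litForm l ∈ Cons (theoryPairs Δ) (worldSet v) := by
          rw [hCW']; exact hl
        obtain ⟨L, hL, hder⟩ := hmem
        have hLv : (conjList L).eval v = true := (conjList_eval v L).mpr hL
        by_cases hex : ∃ r ∈ Δ, r.head = some l ∧ r.bodyForm.eval v = true
        · rw [hl, (headDisj_eval Δ v (some l)).mpr hex]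
        · exfalso
          set w : α → Bool := fun a => if a = l.1 then !(v l.1) else v a with hwdef
          have hheads : ∀ r ∈ Δ, r.bodyForm.eval v = true → r.headForm.eval w = true := by
            intro r hr hb
            have hhv : r.headForm.eval v = true :=
              hsub _ (derives_mem_cons (Derives.base ⟨r, hr, rfl⟩) hb)
            cases hh : r.head with
            | none => simp only [LitRule.headForm, hh, Form.eval] at hhv; exact absurd hhv (by simp)
            | some l' =>
              have hhv' : (litForm l').eval v = true := by
                simpa [LitRule.headForm, hh] using hhv
              have hvl' : v l'.1 = l'.2 := (litForm_eval v l').mp hhv'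
              have hne : l'.1 ≠ l.1 := by
                intro heq1
                apply hex
                refine ⟨r, hr, ?_, hb⟩
                rw [hh]
                have hvl : v l.1 = l.2 := (litForm_eval v l).mp hl
                have : l' = l := by
                  rcases l with ⟨a, b⟩; rcases l' with ⟨a', b'⟩
                  simp only at heq1 hvl hvl'
                  subst heq1
                  rw [hvl] at hvl'
                  rw [hvl']
                congr 1
              simp only [LitRule.headForm, hh]
              rw [litForm_eval]
              show (if l'.1 = l.1 then !(v l.1) else v l'.1) = l'.2
              rw [if_neg hne]
              exact hvl'
          have hlw := derives_heads hsub hder hLv w hheads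
          have hwl : w l.1 = l.2 := (litForm_eval w l).mp hlw
          have hvl : v l.1 = l.2 := (litForm_eval v l).mp hl
          have : w l.1 = !(v l.1) := by rw [hwdef]; simp
          rw [this, hvl] at hwl
          exact (Bool.not_ne_self l.2) hwl
      · have hnd : ¬ (headDisj Δ (some l)).eval v = true := by
          intro h
          obtain ⟨r, hr, hh, hb⟩ := (headDisj_eval Δ v (some l)).mp h
          apply hl
          have := hsub _ (derives_mem_cons (Derives.base ⟨r, hr, rfl⟩) hb)
          simpa [LitRule.headForm, hh] using this
        simp only [Bool.not_eq_true] at hl hnd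
        rw [hl, hnd]
    · rw [iff_eval]
      have hnd : ¬ (headDisj Δ none).eval v = true := by
        intro h
        obtain ⟨r, hr, hh, hb⟩ := (headDisj_eval Δ v none).mp h
        have := hsub _ (derives_mem_cons (Derives.base ⟨r, hr, rfl⟩) hb)
        simp [LitRule.headForm, hh, Form.eval] at this
      simp only [Bool.not_eq_true] at hnd
      rw [hnd]
      rfl
  · intro hc
    apply Set.eq_of_subset_of_subset
    · rintro ψ ⟨L, hL, hd⟩
      have hLv : (conjList L).eval v = true := (conjList_eval v L).mpr hL
      exact derives_sound hc hd hLv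
    · intro ψ hψ
      have hψv : ψ.eval v = true := hψ
      have hex : ∀ a ∈ ψ.atoms, ∃ r ∈ Δ, r.head = some (a, v a) ∧
          r.bodyForm.eval v = true := by
        intro a _
        have h1 := hc.1 (a, v a)
        rw [iff_eval] at h1
        have hlit : (litForm (a, v a)).eval v = true := (litForm_eval v _).mpr rfl
        rw [hlit] at h1
        exact (headDisj_eval Δ v _).mp h1.symm
      obtain ⟨L, hL1, hL2⟩ := exists_bodies ψ.atoms hex
      refine ⟨L, fun φ hφ => hL1 φ hφ, ?_⟩
      have hlits : ∀ a ∈ ψ.atoms,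
          Derives (theoryPairs Δ) (conjList L) (litForm (a, v a)) := by
        intro a ha
        obtain ⟨r, hr, hh, hmem⟩ := hL2 a ha
        have hbase : Derives (theoryPairs Δ) r.bodyForm r.headForm :=
          Derives.base ⟨r, hr, rfl⟩
        have heq : r.headForm = litForm (a, v a) := by simp [LitRule.headForm, hh]
        rw [heq] at hbase
        exact Derives.strengthening (entails_mem hmem) hbase
      have hconj : Derives (theoryPairs Δ) (conjList L)
          (conjList (ψ.atoms.map (fun a => litForm (a, v a)))) := by
        apply derives_conjList
        intro χ hχ
        obtain ⟨a, ha, rfl⟩ := List.mem_map.mp hχ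
        exact hlits a ha
      refine Derives.weakening hconj ?_
      intro w hw
      have hall := hw _ rfl
      rw [conjList_eval] at hall
      have hag : ∀ a ∈ ψ.atoms, w a = v a := by
        intro a ha
        have := hall _ (List.mem_map.mpr ⟨a, ha, rfl⟩)
        exact (litForm_eval w _).mp this
      rw [eval_agree ψ hag]
      exact hψv
end

section
/- For any production inference relation, stating the causal rule φ ⇒ ψ is equivalent to stating both the constraint φ ∧ ¬ψ ⇒ ⊥ and the explanatory rule φ ∧ ψ ⇒ ψ: the smallest causal production inference relations generated by {φ ⇒ ψ} and by {φ ∧ ¬ψ ⇒ ⊥, φ ∧ ψ ⇒ ψ} coincide. -/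
variable {α : Type}

lemma derives_mono {Δ₁ Δ₂ : Set (Form α × Form α)}
    (h : ∀ p ∈ Δ₁, Derives Δ₂ p.1 p.2) {a b : Form α}
    (d : Derives Δ₁ a b) : Derives Δ₂ a b := by
  induction d with
  | base hb => exact h _ hb
  | strengthening he _ ih => exact .strengthening he ih
  | weakening _ he ih => exact .weakening ih he
  | and _ _ ih₁ ih₂ => exact .and ih₁ ih₂
  | top => exact .top
  | bot => exact .bot
  | cut _ _ ih₁ ih₂ => exact .cut ih₁ ih₂
  | or _ _ ih₁ ih₂ => exact .or ih₁ ih₂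


section Helpers
variable {φ ψ : Form α}

lemma d2_imp : ∀ p ∈ ({(φ, ψ)} : Set (Form α × Form α)),
    Derives {(φ.conj ψ.neg, Form.fls), (φ.conj ψ, ψ)} p.1 p.2 := by
  rintro ⟨p, q⟩ hp
  simp only [Set.mem_singleton_iff, Prod.mk.injEq] at hp
  obtain ⟨rfl, rfl⟩ := hp
  have h1 : Derives ({(p.conj q.neg, Form.fls), (p.conj q, q)} :
      Set (Form α × Form α)) (p.conj q.neg) q := by
    refine .weakening (ψ := Form.fls) (.base (by simp)) ?_
    intro v hv
    have := hv Form.fls (by simp)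
    simp [Form.eval] at this
  have h2 : Derives ({(p.conj q.neg, Form.fls), (p.conj q, q)} :
      Set (Form α × Form α)) (p.conj q, q).1 q := .base (by simp)
  refine .strengthening (ψ := (p.conj q.neg).disj (p.conj q)) ?_ (.or h1 h2)
  intro v hv
  have := hv p (by simp)
  simp [Form.eval] at this ⊢
  cases h : Form.eval v q <;> simp [this, h]

lemma d1_imp : ∀ r ∈ ({(φ.conj ψ.neg, Form.fls), (φ.conj ψ, ψ)} :
    Set (Form α × Form α)), Derives {(φ, ψ)} r.1 r.2 := by
  have hbase : Derives ({(φ, ψ)} : Set (Form α × Form α)) φ ψ := .base rfl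
  have hfst : Entails {φ.conj ψ.neg} φ := by
    intro v hv
    have := hv _ (Set.mem_singleton _)
    simp [Form.eval] at this ⊢
    exact this.1
  have hfst2 : Entails {φ.conj ψ} φ := by
    intro v hv
    have := hv _ (Set.mem_singleton _)
    simp [Form.eval] at this ⊢
    exact this.1
  rintro ⟨p, q⟩ hp
  simp only [Set.mem_insert_iff, Set.mem_singleton_iff, Prod.mk.injEq] at hp
  rcases hp with ⟨rfl, rfl⟩ | ⟨rfl, rfl⟩
  · have h1 : Derives ({(φ, ψ)} : Set (Form α × Form α)) (φ.conj ψ.neg) ψ :=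
      .strengthening hfst hbase
    refine .cut h1 (.strengthening (ψ := Form.fls) ?_ .bot)
    intro v hv
    have := hv _ (Set.mem_singleton _)
    simp [Form.eval] at this
    exact absurd this.2 (by simp [this.1.2])
  · exact .strengthening hfst2 hbase

end Helpers

/-- stating the causal rule `φ ⇒ ψ` is equivalent to stating the
constraint `φ ∧ ¬ψ ⇒ ⊥` together with the explanatory rule `φ ∧ ψ ⇒ ψ`: the causal
production inference relations generated by the two causal theories coincide. -/
theorem rule_eq_constraint_and_explanatory {α : Type} (φ ψ : Form α) :
    ∀ a b : Form α,
      Derives {(φ, ψ)} a b ↔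
        Derives {(φ.conj ψ.neg, Form.fls), (φ.conj ψ, ψ)} a b := by
  intro a b
  exact ⟨derives_mono d2_imp, derives_mono d1_imp⟩
end

section
/- A Markovian probabilistic Boolean causal model induces a distribution that is Markov to its causal diagram; in particular π_M(v) factorizes as ∏_V π_M(v(V) | v|Pa(V)) over assignments v to internal variables. -/
open scoped Classical

/-- A Boolean structural causal model. -/
structure SCM (U V : Type) where
  Pa : V → Finset V
  Err : V → Finset U
  F : (v : V) → ({p // p ∈ Pa v} → Bool) → ({e // e ∈ Err v} → Bool) → Bool

/-- The causal diagram (edge `p → q` iff `p ∈ Pa q`) has no directed cycles. -/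
def SCM.Acyclic {U V : Type} (M : SCM U V) : Prop :=
  ∀ v : V, ¬ Relation.TransGen (fun a b : V => a ∈ M.Pa b) v v

variable {U V : Type} [Fintype U] [Fintype V] [DecidableEq U] [DecidableEq V]

/-- Marginal probability, under a distribution `π` on situations, that the external
variables in `S` take the values prescribed by `f`. -/
noncomputable def margU (π : (U → Bool) → ℝ) (S : Set U) (f : U → Bool) : ℝ :=
  ∑ u : U → Bool, if ∀ x ∈ S, u x = f x then π u else 0

/-- The induced distribution on internal assignments: the probability that the unique
solution takes the value `a`. -/
noncomputable def pushV (π : (U → Bool) → ℝ) (sol : (U → Bool) → (V → Bool))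
    (a : V → Bool) : ℝ :=
  ∑ u : U → Bool, if sol u = a then π u else 0

/-- Marginal, on the internal variables, of the induced distribution. -/
noncomputable def margV (π : (U → Bool) → ℝ) (sol : (U → Bool) → (V → Bool))
    (S : Set V) (f : V → Bool) : ℝ :=
  ∑ a : V → Bool, if ∀ s ∈ S, a s = f s then pushV (U := U) π sol a else 0

/-- patch `f` with config `c` on `A` -/
noncomputable def patch (A : Finset U) (c : {x // x ∈ A} → Bool) (f : U → Bool) : U → Bool :=
  fun x => if h : x ∈ A then c ⟨x, h⟩ else f x

lemma margU_congr (π : (U → Bool) → ℝ) (S : Set U) {f g : U → Bool}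
    (h : ∀ x ∈ S, f x = g x) : margU π S f = margU π S g := by
  unfold margU
  refine Finset.sum_congr rfl fun u _ => ?_
  refine if_congr ?_ rfl rfl
  constructor <;> intro hu x hx <;> rw [hu x hx]
  · exact h x hx
  · exact (h x hx).symm

lemma margU_empty (π : (U → Bool) → ℝ) (f : U → Bool) :
    margU π (∅ : Set U) f = ∑ u : U → Bool, π u := by
  unfold margU
  refine Finset.sum_congr rfl fun u _ => ?_
  simp

lemma sum_out (π : (U → Bool) → ℝ) (A : Finset U) (S : Set U) (hd : ∀ x ∈ A, x ∉ S)
    (f : U → Bool) :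
    ∑ c : {x // x ∈ A} → Bool, margU π (S ∪ ↑A) (patch A c f) = margU π S f := by
  unfold margU
  rw [Finset.sum_comm]
  refine Finset.sum_congr rfl fun u _ => ?_
  have key : ∀ c : {x // x ∈ A} → Bool,
      (∀ x ∈ S ∪ ↑A, u x = patch A c f x) ↔
      ((∀ x ∈ S, u x = f x) ∧ c = fun e => u e.1) := by
    intro c
    constructor
    · intro h
      constructor
      · intro x hx
        have := h x (Or.inl hx)
        rwa [patch, dif_neg (fun hA => hd x hA hx)] at this
      · funext e
        have := h e.1 (Or.inr e.2)
        rw [patch, dif_pos e.2] at this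
        simp at this
        simp [this]
    · rintro ⟨h1, rfl⟩ x hx
      rcases hx with hx | hx
      · rw [patch, dif_neg (fun hA => hd x hA hx)]; exact h1 x hx
      · simp [patch, Finset.mem_coe.mp hx]
  by_cases hP : ∀ x ∈ S, u x = f x
  · rw [if_pos hP]
    rw [Finset.sum_eq_single_of_mem (fun e => u e.1) (Finset.mem_univ _)]
    · rw [if_pos ((key _).mpr ⟨hP, rfl⟩)]
    · intro c _ hc
      rw [if_neg (fun h => hc ((key c).mp h).2)]
  · rw [if_neg hP]
    refine Finset.sum_eq_zero fun c _ => ?_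
    rw [if_neg (fun h => hP ((key c).mp h).1)]

lemma sum_out_total (π : (U → Bool) → ℝ) (hπ1 : ∑ u : U → Bool, π u = 1)
    (A : Finset U) (f : U → Bool) :
    ∑ c : {x // x ∈ A} → Bool, margU π ↑A (patch A c f) = 1 := by
  have h := sum_out π A (∅ : Set U) (by simp) f
  simp only [Set.empty_union] at h
  rw [h, margU_empty, hπ1]

lemma claimD_aux (M : SCM U V) (π : (U → Bool) → ℝ)
    (hπ1 : ∑ u : U → Bool, π u = 1)
    (hdisj : ∀ v w : V, v ≠ w → Disjoint (M.Err v) (M.Err w))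
    (hindep : ∀ f : U → Bool,
      margU π (⋃ v : V, ↑(M.Err v)) f = ∏ v : V, margU π ↑(M.Err v) f)
    (R : Finset V) :
    ∀ f : U → Bool,
      margU π ↑((Finset.univ \ R).biUnion M.Err) f
        = ∏ v ∈ Finset.univ \ R, margU π ↑(M.Err v) f := by
  induction R using Finset.induction_on with
  | empty =>
      intro f
      rw [Finset.sdiff_empty]
      have h1 : ((Finset.univ.biUnion M.Err : Finset U) : Set U) = ⋃ v : V, ↑(M.Err v) := by
        ext x; simp
      rw [h1]
      exact hindep f
  | @insert w R hw ih =>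
      intro f
      set T : Finset V := Finset.univ \ insert w R with hT
      have hTw : w ∉ T := by simp [hT]
      have hT' : Finset.univ \ R = insert w T := by
        ext x
        simp only [hT, Finset.mem_sdiff, Finset.mem_insert, Finset.mem_univ, true_and]
        by_cases hx : x = w <;> simp [hx, hw]
      have hdT : ∀ x ∈ M.Err w, x ∉ ((T.biUnion M.Err : Finset U) : Set U) := by
        intro x hx hx'
        rw [Finset.mem_coe, Finset.mem_biUnion] at hx'
        obtain ⟨v, hv, hxv⟩ := hx'
        exact Finset.disjoint_left.mp (hdisj w v (fun h => hTw (h ▸ hv))) hx hxv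
      have hset : (((insert w T).biUnion M.Err : Finset U) : Set U)
          = ((T.biUnion M.Err : Finset U) : Set U) ∪ ↑(M.Err w) := by
        ext x
        simp only [Finset.coe_biUnion, Finset.biUnion_insert, Finset.coe_union,
          Set.mem_union, Finset.mem_coe, Finset.mem_biUnion]
        tauto
      have key : ∑ c : {x // x ∈ M.Err w} → Bool,
          margU π ↑((insert w T).biUnion M.Err) (patch (M.Err w) c f)
          = ∑ c : {x // x ∈ M.Err w} → Bool,
            ∏ v ∈ insert w T, margU π ↑(M.Err v) (patch (M.Err w) c f) := by
        refine Finset.sum_congr rfl fun c _ => ?_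
        rw [← hT', ih]
      have lhs : ∑ c : {x // x ∈ M.Err w} → Bool,
          margU π ↑((insert w T).biUnion M.Err) (patch (M.Err w) c f)
          = margU π ↑(T.biUnion M.Err) f := by
        calc ∑ c : {x // x ∈ M.Err w} → Bool,
            margU π ↑((insert w T).biUnion M.Err) (patch (M.Err w) c f)
            = ∑ c : {x // x ∈ M.Err w} → Bool,
              margU π (↑(T.biUnion M.Err) ∪ ↑(M.Err w)) (patch (M.Err w) c f) := by
              refine Finset.sum_congr rfl fun c _ => by rw [hset]
          _ = margU π ↑(T.biUnion M.Err) f := sum_out π (M.Err w) _ hdT f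
      have rhs : ∑ c : {x // x ∈ M.Err w} → Bool,
          ∏ v ∈ insert w T, margU π ↑(M.Err v) (patch (M.Err w) c f)
          = ∏ v ∈ T, margU π ↑(M.Err v) f := by
        have hv' : ∀ (c : {x // x ∈ M.Err w} → Bool), ∀ v ∈ T,
            margU π ↑(M.Err v) (patch (M.Err w) c f) = margU π ↑(M.Err v) f := by
          intro c v hv
          refine margU_congr π _ fun x hx => ?_
          have hxw : x ∉ M.Err w := fun hxw =>
            Finset.disjoint_left.mp (hdisj v w (fun h => hTw (h ▸ hv)))
              (Finset.mem_coe.mp hx) hxw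
          simp [patch, hxw]
        calc ∑ c : {x // x ∈ M.Err w} → Bool,
            ∏ v ∈ insert w T, margU π ↑(M.Err v) (patch (M.Err w) c f)
            = ∑ c : {x // x ∈ M.Err w} → Bool,
              margU π ↑(M.Err w) (patch (M.Err w) c f) * ∏ v ∈ T, margU π ↑(M.Err v) f := by
              refine Finset.sum_congr rfl fun c _ => ?_
              rw [Finset.prod_insert hTw]
              congr 1
              exact Finset.prod_congr rfl (hv' c)
          _ = (∑ c : {x // x ∈ M.Err w} → Bool,
              margU π ↑(M.Err w) (patch (M.Err w) c f)) * ∏ v ∈ T, margU π ↑(M.Err v) f := by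
              rw [Finset.sum_mul]
          _ = ∏ v ∈ T, margU π ↑(M.Err v) f := by
              rw [sum_out_total π hπ1, one_mul]
      rw [← lhs, key, rhs]

lemma claimD (M : SCM U V) (π : (U → Bool) → ℝ)
    (hπ1 : ∑ u : U → Bool, π u = 1)
    (hdisj : ∀ v w : V, v ≠ w → Disjoint (M.Err v) (M.Err w))
    (hindep : ∀ f : U → Bool,
      margU π (⋃ v : V, ↑(M.Err v)) f = ∏ v : V, margU π ↑(M.Err v) f)
    (T : Finset V) (f : U → Bool) :
    margU π ↑(T.biUnion M.Err) f = ∏ v ∈ T, margU π ↑(M.Err v) f := by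
  have h := claimD_aux M π hπ1 hdisj hindep (Finset.univ \ T) f
  rwa [Finset.sdiff_sdiff_self_left, Finset.univ_inter] at h

lemma claimC (M : SCM U V) (π : (U → Bool) → ℝ)
    (hπ1 : ∑ u : U → Bool, π u = 1)
    (hdisj : ∀ v w : V, v ≠ w → Disjoint (M.Err v) (M.Err w))
    (hindep : ∀ f : U → Bool,
      margU π (⋃ v : V, ↑(M.Err v)) f = ∏ v : V, margU π ↑(M.Err v) f)
    (T₁ T₂ : Finset V) (hT : Disjoint T₁ T₂) (f g : U → Bool) :
    ∑ u : U → Bool, (if (∀ x ∈ T₁.biUnion M.Err, u x = f x)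
        ∧ (∀ x ∈ T₂.biUnion M.Err, u x = g x) then π u else 0)
      = margU π ↑(T₁.biUnion M.Err) f * margU π ↑(T₂.biUnion M.Err) g := by
  have hd12 : ∀ x ∈ T₁.biUnion M.Err, x ∉ T₂.biUnion M.Err := by
    intro x hx hx'
    rw [Finset.mem_biUnion] at hx hx'
    obtain ⟨v, hv, hxv⟩ := hx
    obtain ⟨w, hw, hxw⟩ := hx'
    exact Finset.disjoint_left.mp
      (hdisj v w (fun h => Finset.disjoint_left.mp hT hv (h ▸ hw))) hxv hxw
  set h : U → Bool := fun x => if x ∈ T₁.biUnion M.Err then f x else g x with hh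
  have step1 : ∑ u : U → Bool, (if (∀ x ∈ T₁.biUnion M.Err, u x = f x)
        ∧ (∀ x ∈ T₂.biUnion M.Err, u x = g x) then π u else 0)
      = margU π ↑((T₁ ∪ T₂).biUnion M.Err) h := by
    unfold margU
    refine Finset.sum_congr rfl fun u _ => ?_
    have hiff : ((∀ x ∈ T₁.biUnion M.Err, u x = f x)
        ∧ (∀ x ∈ T₂.biUnion M.Err, u x = g x))
        ↔ (∀ x ∈ ((((T₁ ∪ T₂).biUnion M.Err) : Finset U) : Set U), u x = h x) := by
      constructor
      · rintro ⟨h1, h2⟩ x hx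
        rw [Finset.mem_coe, Finset.mem_biUnion] at hx
        obtain ⟨v, hv, hxv⟩ := hx
        rcases Finset.mem_union.mp hv with hv1 | hv2
        · have hxA : x ∈ T₁.biUnion M.Err := Finset.mem_biUnion.mpr ⟨v, hv1, hxv⟩
          rw [hh]; simp only [hxA, if_pos]
          exact h1 x hxA
        · have hxB : x ∈ T₂.biUnion M.Err := Finset.mem_biUnion.mpr ⟨v, hv2, hxv⟩
          have hxA : x ∉ T₁.biUnion M.Err := fun hc => hd12 x hc hxB
          rw [hh]; simp only [hxA, if_neg, if_false]
          exact h2 x hxB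
      · intro hu
        constructor
        · intro x hx
          have hx' : x ∈ (T₁ ∪ T₂).biUnion M.Err := by
            rw [Finset.mem_biUnion] at hx ⊢
            obtain ⟨v, hv, hxv⟩ := hx
            exact ⟨v, Finset.mem_union_left _ hv, hxv⟩
          have h2 : u x = if x ∈ T₁.biUnion M.Err then f x else g x :=
            hu x (Finset.mem_coe.mpr hx')
          rwa [if_pos hx] at h2
        · intro x hx
          have hx' : x ∈ (T₁ ∪ T₂).biUnion M.Err := by
            rw [Finset.mem_biUnion] at hx ⊢
            obtain ⟨v, hv, hxv⟩ := hx
            exact ⟨v, Finset.mem_union_right _ hv, hxv⟩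
          have hxA : x ∉ T₁.biUnion M.Err := fun hc => hd12 x hc hx
          have h2 : u x = if x ∈ T₁.biUnion M.Err then f x else g x :=
            hu x (Finset.mem_coe.mpr hx')
          rwa [if_neg hxA] at h2
    by_cases hc : (∀ x ∈ T₁.biUnion M.Err, u x = f x)
        ∧ (∀ x ∈ T₂.biUnion M.Err, u x = g x)
    · rw [if_pos hc, if_pos (hiff.mp hc)]
    · rw [if_neg hc, if_neg (fun hcon => hc (hiff.mpr hcon))]
  rw [step1, claimD M π hπ1 hdisj hindep, Finset.prod_union hT]
  congr 1
  · rw [claimD M π hπ1 hdisj hindep]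
    refine Finset.prod_congr rfl fun v hv => ?_
    refine margU_congr π _ fun x hx => ?_
    have hxA : x ∈ T₁.biUnion M.Err := Finset.mem_biUnion.mpr ⟨v, hv, Finset.mem_coe.mp hx⟩
    rw [hh]; simp [hxA]
  · rw [claimD M π hπ1 hdisj hindep]
    refine Finset.prod_congr rfl fun v hv => ?_
    refine margU_congr π _ fun x hx => ?_
    have hxB : x ∈ T₂.biUnion M.Err := Finset.mem_biUnion.mpr ⟨v, hv, Finset.mem_coe.mp hx⟩
    have hxA : x ∉ T₁.biUnion M.Err := fun hc => hd12 x hc hxB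
    rw [hh]; simp [hxA]

lemma collapse {β : Type} [Fintype β] {P : β → Prop} [DecidablePred P] (c₀ : β)
    (h : ∀ c, P c ↔ c = c₀) (G : β → ℝ) :
    (∑ c : β, if P c then G c else 0) = G c₀ := by
  rw [Finset.sum_eq_single_of_mem c₀ (Finset.mem_univ _)]
  · rw [if_pos ((h c₀).mpr rfl)]
  · intro c _ hc
    rw [if_neg (fun hp => hc ((h c).mp hp))]

lemma ite_prop_irrel {P Q : Prop} {i1 : Decidable P} {i2 : Decidable Q} (h : P ↔ Q) (a : ℝ) :
    (@ite ℝ P i1 a 0) = @ite ℝ Q i2 a 0 := by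
  by_cases hp : P
  · rw [if_pos hp, if_pos (h.mp hp)]
  · rw [if_neg hp, if_neg (fun hq => hp (h.mpr hq))]

lemma patch_cond (A : Finset U) (u : U → Bool) (c : {x // x ∈ A} → Bool) :
    (∀ x ∈ A, u x = patch A c (fun _ => false) x) ↔ c = fun e => u e.1 := by
  constructor
  · intro h
    funext e
    have := h e.1 e.2
    rw [patch, dif_pos e.2] at this
    exact this.symm
  · rintro rfl x hx
    simp [patch, hx]

lemma patch_cond' (A : Finset U) (u : U → Bool) (c : {x // x ∈ A} → Bool) :
    (∀ x ∈ (↑A : Set U), u x = patch A c (fun _ => false) x) ↔ c = fun e => u e.1 := by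
  rw [← patch_cond A u c]
  constructor
  · intro h x hx; exact h x (Finset.mem_coe.mpr hx)
  · intro h x hx; exact h x (Finset.mem_coe.mp hx)

lemma patch_agree (A : Finset U) (u : U → Bool) :
    ∀ x ∈ A, patch A (fun e => u e.1) (fun _ => false) x = u x := by
  intro x hx
  simp [patch, hx]

lemma group (π : (U → Bool) → ℝ) (A : Finset U) (φ : (U → Bool) → Prop)
    (hφ : ∀ u u' : U → Bool, (∀ x ∈ A, u x = u' x) → (φ u ↔ φ u')) :
    ∑ c : {x // x ∈ A} → Bool,
        (if φ (patch A c (fun _ => false)) then (1:ℝ) else 0)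
          * margU π ↑A (patch A c (fun _ => false))
      = ∑ u : U → Bool, (if φ u then π u else 0) := by
  unfold margU
  trans ∑ c : {x // x ∈ A} → Bool, ∑ u : U → Bool,
      (if ∀ x ∈ (↑A : Set U), u x = patch A c (fun _ => false) x then
        (if φ (patch A c (fun _ => false)) then (1:ℝ) else 0) * π u else 0)
  · refine Finset.sum_congr rfl fun c _ => ?_
    rw [Finset.mul_sum]
    refine Finset.sum_congr rfl fun u _ => ?_
    by_cases hc : ∀ x ∈ (↑A : Set U), u x = patch A c (fun _ => false) x
    · rw [if_pos hc, if_pos hc]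
    · rw [if_neg hc, if_neg hc, mul_zero]
  rw [Finset.sum_comm]
  refine Finset.sum_congr rfl fun u _ => ?_
  rw [collapse (fun e => u e.1) (fun c => patch_cond' A u c)]
  have hiff := hφ (patch A (fun e => u e.1) (fun _ => false)) u (patch_agree A u)
  by_cases hu : φ u
  · rw [if_pos (hiff.mpr hu), one_mul, if_pos hu]
  · rw [if_neg (fun hp => hu (hiff.mp hp)), zero_mul, if_neg hu]

lemma indep2 (M : SCM U V) (π : (U → Bool) → ℝ)
    (hπ1 : ∑ u : U → Bool, π u = 1)
    (hdisj : ∀ v w : V, v ≠ w → Disjoint (M.Err v) (M.Err w))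
    (hindep : ∀ f : U → Bool,
      margU π (⋃ v : V, ↑(M.Err v)) f = ∏ v : V, margU π ↑(M.Err v) f)
    (T₁ T₂ : Finset V) (hT : Disjoint T₁ T₂)
    (φ ψ : (U → Bool) → Prop)
    (hφ : ∀ u u' : U → Bool, (∀ x ∈ T₁.biUnion M.Err, u x = u' x) → (φ u ↔ φ u'))
    (hψ : ∀ u u' : U → Bool, (∀ x ∈ T₂.biUnion M.Err, u x = u' x) → (ψ u ↔ ψ u')) :
    ∑ u : U → Bool, (if φ u ∧ ψ u then π u else 0)
      = (∑ u : U → Bool, if φ u then π u else 0)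
          * (∑ u : U → Bool, if ψ u then π u else 0) := by
  set A : Finset U := T₁.biUnion M.Err with hA
  set B : Finset U := T₂.biUnion M.Err with hB
  symm
  rw [← group π A φ hφ, ← group π B ψ hψ, Finset.sum_mul_sum]
  trans ∑ c : {x // x ∈ A} → Bool, ∑ d : {x // x ∈ B} → Bool,
      ((if φ (patch A c (fun _ => false)) then (1:ℝ) else 0)
        * ((if ψ (patch B d (fun _ => false)) then (1:ℝ) else 0)
          * (margU π ↑A (patch A c (fun _ => false))
              * margU π ↑B (patch B d (fun _ => false)))))
  · exact Finset.sum_congr rfl fun c _ => Finset.sum_congr rfl fun d _ => by ring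
  trans ∑ c : {x // x ∈ A} → Bool, ∑ d : {x // x ∈ B} → Bool,
      ∑ u : U → Bool,
      (if (∀ x ∈ A, u x = patch A c (fun _ => false) x)
          ∧ (∀ x ∈ B, u x = patch B d (fun _ => false) x) then
        (if φ (patch A c (fun _ => false)) then (1:ℝ) else 0)
          * ((if ψ (patch B d (fun _ => false)) then (1:ℝ) else 0) * π u) else 0)
  · refine Finset.sum_congr rfl fun c _ => Finset.sum_congr rfl fun d _ => ?_
    rw [← claimC M π hπ1 hdisj hindep T₁ T₂ hT, Finset.mul_sum, Finset.mul_sum]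
    refine Finset.sum_congr rfl fun u _ => ?_
    by_cases hc : (∀ x ∈ A, u x = patch A c (fun _ => false) x)
        ∧ (∀ x ∈ B, u x = patch B d (fun _ => false) x)
    · rw [if_pos hc, if_pos hc]
    · rw [if_neg hc, if_neg hc, mul_zero, mul_zero]
  trans ∑ u : U → Bool, ∑ c : {x // x ∈ A} → Bool, ∑ d : {x // x ∈ B} → Bool,
      (if (∀ x ∈ A, u x = patch A c (fun _ => false) x)
          ∧ (∀ x ∈ B, u x = patch B d (fun _ => false) x) then
        (if φ (patch A c (fun _ => false)) then (1:ℝ) else 0)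
          * ((if ψ (patch B d (fun _ => false)) then (1:ℝ) else 0) * π u) else 0)
  · exact (Finset.sum_congr rfl fun c _ => Finset.sum_comm).trans Finset.sum_comm
  refine Finset.sum_congr rfl fun u _ => ?_
  trans ∑ c : {x // x ∈ A} → Bool,
      (if (∀ x ∈ A, u x = patch A c (fun _ => false) x) then
        (if φ (patch A c (fun _ => false)) then (1:ℝ) else 0)
          * ((if ψ (patch B (fun e => u e.1) (fun _ => false)) then (1:ℝ) else 0) * π u) else 0)
  · refine Finset.sum_congr rfl fun c _ => ?_
    by_cases hcA : ∀ x ∈ A, u x = patch A c (fun _ => false) x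
    · rw [if_pos hcA]
      trans ∑ d : {x // x ∈ B} → Bool,
          (if (∀ x ∈ B, u x = patch B d (fun _ => false) x) then
            (if φ (patch A c (fun _ => false)) then (1:ℝ) else 0)
              * ((if ψ (patch B d (fun _ => false)) then (1:ℝ) else 0) * π u) else 0)
      · refine Finset.sum_congr rfl fun d _ => ?_
        by_cases hcB : ∀ x ∈ B, u x = patch B d (fun _ => false) x
        · rw [if_pos ⟨hcA, hcB⟩, if_pos hcB]
        · rw [if_neg (fun h => hcB h.2), if_neg hcB]
      · exact collapse (P := fun d => ∀ x ∈ B, u x = patch B d (fun _ => false) x)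
          (fun e => u e.1) (fun d => patch_cond B u d)
          (fun d => (if φ (patch A c (fun _ => false)) then (1:ℝ) else 0)
            * ((if ψ (patch B d (fun _ => false)) then (1:ℝ) else 0) * π u))
    · rw [if_neg hcA]
      refine Finset.sum_eq_zero fun d _ => ?_
      rw [if_neg (fun h => hcA h.1)]
  rw [collapse (fun e => u e.1) (fun c => patch_cond A u c)]
  have hiffA := hφ (patch A (fun e => u e.1) (fun _ => false)) u (patch_agree A u)
  have hiffB := hψ (patch B (fun e => u e.1) (fun _ => false)) u (patch_agree B u)
  by_cases h1 : φ u <;> by_cases h2 : ψ u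
  · rw [if_pos (hiffA.mpr h1), if_pos (hiffB.mpr h2), if_pos ⟨h1, h2⟩]; ring
  · rw [if_pos (hiffA.mpr h1), if_neg (fun hp => h2 (hiffB.mp hp)),
      if_neg (fun hp : φ u ∧ ψ u => h2 hp.2)]; ring
  · rw [if_neg (fun hp => h1 (hiffA.mp hp)), if_neg (fun hp : φ u ∧ ψ u => h1 hp.1)]; ring
  · rw [if_neg (fun hp => h1 (hiffA.mp hp)), if_neg (fun hp : φ u ∧ ψ u => h1 hp.1)]; ring

lemma wf_transgen (M : SCM U V) (hA : M.Acyclic) :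
    WellFounded (Relation.TransGen (fun a b : V => a ∈ M.Pa b)) := by
  have h1 : IsTrans V (Relation.TransGen fun a b : V => a ∈ M.Pa b) :=
    ⟨fun a b c hab hbc => hab.trans hbc⟩
  have h2 : IsIrrefl V (Relation.TransGen fun a b : V => a ∈ M.Pa b) := ⟨hA⟩
  exact Finite.wellFounded_of_trans_of_irrefl _

noncomputable def anc (M : SCM U V) (v : V) : Finset V :=
  Finset.univ.filter (fun w => w = v ∨ Relation.TransGen (fun a b : V => a ∈ M.Pa b) w v)

lemma sol_dep (M : SCM U V) (hA : M.Acyclic) (sol : (U → Bool) → (V → Bool))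
    (hsol : ∀ (u : U → Bool) (v : V),
      sol u v = M.F v (fun p => sol u p.1) (fun e => u e.1)) (v : V) :
    ∀ u u' : U → Bool, (∀ x ∈ (anc M v).biUnion M.Err, u x = u' x) → sol u v = sol u' v := by
  refine (wf_transgen M hA).induction
    (C := fun v => ∀ u u' : U → Bool,
      (∀ x ∈ (anc M v).biUnion M.Err, u x = u' x) → sol u v = sol u' v) v ?_
  intro v ih u u' hu
  rw [hsol u v, hsol u' v]
  have hparents : (fun p : {p // p ∈ M.Pa v} => sol u p.1) = fun p => sol u' p.1 := by
    funext p
    have hrel : Relation.TransGen (fun a b : V => a ∈ M.Pa b) p.1 v :=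
      Relation.TransGen.single p.2
    refine ih p.1 hrel u u' fun x hx => hu x ?_
    rw [Finset.mem_biUnion] at hx ⊢
    obtain ⟨w, hw, hxw⟩ := hx
    refine ⟨w, ?_, hxw⟩
    rw [anc, Finset.mem_filter] at hw ⊢
    refine ⟨Finset.mem_univ _, Or.inr ?_⟩
    rcases hw.2 with rfl | htg
    · exact hrel
    · exact htg.trans hrel
  have herr : (fun e : {e // e ∈ M.Err v} => u e.1) = fun e => u' e.1 := by
    funext e
    refine hu e.1 ?_
    rw [Finset.mem_biUnion]
    exact ⟨v, by rw [anc]; simp, e.2⟩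
  rw [hparents, herr]

noncomputable def qfac (M : SCM U V) (π : (U → Bool) → ℝ) (v : V) (f : V → Bool) : ℝ :=
  ∑ u : U → Bool, if M.F v (fun p => f p.1) (fun e => u e.1) = f v then π u else 0

lemma margV_eq (π : (U → Bool) → ℝ) (sol : (U → Bool) → (V → Bool)) (S : Set V)
    (f : V → Bool) :
    margV π sol S f = ∑ u : U → Bool, if ∀ s ∈ S, sol u s = f s then π u else 0 := by
  unfold margV pushV
  trans ∑ a : V → Bool, ∑ u : U → Bool,
      (if sol u = a then (if ∀ s ∈ S, a s = f s then π u else 0) else 0)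
  · refine Finset.sum_congr rfl fun a _ => ?_
    by_cases hc : ∀ s ∈ S, a s = f s
    · rw [if_pos hc]
      refine Finset.sum_congr rfl fun u _ => ?_
      by_cases hs : sol u = a
      · rw [if_pos hs, if_pos hs, if_pos hc]
      · rw [if_neg hs, if_neg hs]
    · rw [if_neg hc]
      symm
      refine Finset.sum_eq_zero fun u _ => ?_
      by_cases hs : sol u = a
      · rw [if_pos hs, if_neg hc]
      · rw [if_neg hs]
  rw [Finset.sum_comm]
  refine Finset.sum_congr rfl fun u _ => ?_
  exact collapse (P := fun a => sol u = a) (sol u) (fun a => eq_comm)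
    (fun a => if ∀ s ∈ S, a s = f s then π u else 0)

lemma prod_indep (M : SCM U V) (π : (U → Bool) → ℝ)
    (hπ1 : ∑ u : U → Bool, π u = 1)
    (hdisj : ∀ v w : V, v ≠ w → Disjoint (M.Err v) (M.Err w))
    (hindep : ∀ f : U → Bool,
      margU π (⋃ v : V, ↑(M.Err v)) f = ∏ v : V, margU π ↑(M.Err v) f)
    (φ : V → (U → Bool) → Prop)
    (hφ : ∀ (v : V) (u u' : U → Bool), (∀ x ∈ M.Err v, u x = u' x) → (φ v u ↔ φ v u'))
    (T : Finset V) :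
    ∑ u : U → Bool, (if ∀ v ∈ T, φ v u then π u else 0)
      = ∏ v ∈ T, ∑ u : U → Bool, (if φ v u then π u else 0) := by
  induction T using Finset.induction_on with
  | empty => simpa using hπ1
  | @insert w T hw ih =>
      have hφw : ∀ u u' : U → Bool,
          (∀ x ∈ ({w} : Finset V).biUnion M.Err, u x = u' x) → (φ w u ↔ φ w u') := by
        intro u u' h
        refine hφ w u u' fun x hx => h x ?_
        rw [Finset.singleton_biUnion]
        exact hx
      have hψ : ∀ u u' : U → Bool,
          (∀ x ∈ T.biUnion M.Err, u x = u' x) → ((∀ v ∈ T, φ v u) ↔ (∀ v ∈ T, φ v u')) := by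
        intro u u' h
        refine forall_congr' fun v => ?_
        refine imp_congr_right fun hv => ?_
        refine hφ v u u' fun x hx => h x (Finset.mem_biUnion.mpr ⟨v, hv, hx⟩)
      have key := indep2 M π hπ1 hdisj hindep {w} T
        (Finset.disjoint_singleton_left.mpr hw) (φ w) (fun u => ∀ v ∈ T, φ v u) hφw hψ
      calc ∑ u : U → Bool, (if ∀ v ∈ insert w T, φ v u then π u else 0)
          = ∑ u : U → Bool, (if φ w u ∧ ∀ v ∈ T, φ v u then π u else 0) := by
            refine Finset.sum_congr rfl fun u _ => ?_
            by_cases hc : φ w u ∧ ∀ v ∈ T, φ v u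
            · rw [if_pos hc, if_pos ((Finset.forall_mem_insert w T (fun v => φ v u)).mpr hc)]
            · rw [if_neg hc, if_neg (fun h => hc ((Finset.forall_mem_insert w T (fun v => φ v u)).mp h))]
        _ = (∑ u : U → Bool, if φ w u then π u else 0)
              * (∑ u : U → Bool, if ∀ v ∈ T, φ v u then π u else 0) := by
            refine Eq.trans ?_ (Eq.trans key ?_)
            · exact Finset.sum_congr rfl fun u _ => ite_prop_irrel Iff.rfl (π u)
            · congr 1
              exact Finset.sum_congr rfl fun u _ => ite_prop_irrel Iff.rfl (π u)
        _ = ∏ v ∈ insert w T, ∑ u : U → Bool, (if φ v u then π u else 0) := by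
            rw [Finset.prod_insert hw, ih]

lemma pushV_factor (M : SCM U V) (hA : M.Acyclic) (π : (U → Bool) → ℝ)
    (hπ1 : ∑ u : U → Bool, π u = 1)
    (hdisj : ∀ v w : V, v ≠ w → Disjoint (M.Err v) (M.Err w))
    (hindep : ∀ f : U → Bool,
      margU π (⋃ v : V, ↑(M.Err v)) f = ∏ v : V, margU π ↑(M.Err v) f)
    (sol : (U → Bool) → (V → Bool))
    (hsol : ∀ (u : U → Bool) (v : V),
      sol u v = M.F v (fun p => sol u p.1) (fun e => u e.1))
    (a : V → Bool) :
    pushV π sol a = ∏ v : V, qfac M π v a := by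
  have hev : ∀ u : U → Bool, (sol u = a) ↔
      (∀ v ∈ (Finset.univ : Finset V),
        M.F v (fun p => a p.1) (fun e => u e.1) = a v) := by
    intro u
    constructor
    · intro h v _
      have hv := hsol u v
      rw [h] at hv
      exact hv.symm
    · intro h
      funext v
      refine (wf_transgen M hA).induction (C := fun v => sol u v = a v) v ?_
      intro v ih
      rw [hsol u v]
      have hp : (fun p : {p // p ∈ M.Pa v} => sol u p.1) = fun p => a p.1 :=
        funext fun p => ih p.1 (Relation.TransGen.single p.2)
      rw [hp]
      exact h v (Finset.mem_univ v)
  unfold pushV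
  trans ∑ u : U → Bool, (if ∀ v ∈ (Finset.univ : Finset V),
      M.F v (fun p => a p.1) (fun e => u e.1) = a v then π u else 0)
  · refine Finset.sum_congr rfl fun u _ => ?_
    by_cases hc : sol u = a
    · rw [if_pos hc, if_pos ((hev u).mp hc)]
    · rw [if_neg hc, if_neg (fun hc2 => hc ((hev u).mpr hc2))]
  refine Eq.trans (Eq.trans ?_ (prod_indep M π hπ1 hdisj hindep
      (fun v u => M.F v (fun p => a p.1) (fun e => u e.1) = a v)
      (fun v u u' h => by
        have he : (fun e : {e // e ∈ M.Err v} => u e.1) = fun e => u' e.1 :=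
          funext fun e => h e.1 e.2
        beta_reduce
        rw [he]) Finset.univ)) ?_
  · exact Finset.sum_congr rfl fun u _ => ite_prop_irrel Iff.rfl (π u)
  · refine Finset.prod_congr rfl fun v _ => ?_
    unfold qfac
    exact Finset.sum_congr rfl fun u _ => ite_prop_irrel Iff.rfl (π u)

lemma condL (M : SCM U V) (hA : M.Acyclic) (π : (U → Bool) → ℝ)
    (hπ1 : ∑ u : U → Bool, π u = 1)
    (hdisj : ∀ v w : V, v ≠ w → Disjoint (M.Err v) (M.Err w))
    (hindep : ∀ f : U → Bool,
      margU π (⋃ v : V, ↑(M.Err v)) f = ∏ v : V, margU π ↑(M.Err v) f)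
    (sol : (U → Bool) → (V → Bool))
    (hsol : ∀ (u : U → Bool) (v : V),
      sol u v = M.F v (fun p => sol u p.1) (fun e => u e.1))
    (v : V) (S : Set V) (hPa : ∀ p ∈ M.Pa v, (p : V) ∈ S)
    (hS : ∀ s ∈ S, s ≠ v ∧ ¬ Relation.TransGen (fun a b : V => a ∈ M.Pa b) v s)
    (f : V → Bool) :
    margV π sol ({v} ∪ S) f = qfac M π v f * margV π sol S f := by
  set W : Finset V := Finset.univ.filter
    (fun w => ∃ s ∈ S, w = s ∨ Relation.TransGen (fun a b : V => a ∈ M.Pa b) w s) with hWdef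
  have hvW : v ∉ W := by
    rw [hWdef, Finset.mem_filter]
    rintro ⟨-, s, hs, h⟩
    rcases h with rfl | htg
    · exact (hS v hs).1 rfl
    · exact (hS s hs).2 htg
  have hdisjvW : Disjoint ({v} : Finset V) W := Finset.disjoint_singleton_left.mpr hvW
  have hφdep : ∀ u u' : U → Bool, (∀ x ∈ ({v} : Finset V).biUnion M.Err, u x = u' x) →
      ((M.F v (fun p => f p.1) (fun e => u e.1) = f v)
        ↔ (M.F v (fun p => f p.1) (fun e => u' e.1) = f v)) := by
    intro u u' h
    have he : (fun e : {e // e ∈ M.Err v} => u e.1) = fun e => u' e.1 := by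
      funext e
      refine h e.1 ?_
      rw [Finset.singleton_biUnion]
      exact e.2
    rw [he]
  have hψdep : ∀ u u' : U → Bool, (∀ x ∈ W.biUnion M.Err, u x = u' x) →
      ((∀ s ∈ S, sol u s = f s) ↔ (∀ s ∈ S, sol u' s = f s)) := by
    intro u u' h
    have hsols : ∀ s ∈ S, sol u s = sol u' s := by
      intro s hs
      refine sol_dep M hA sol hsol s u u' fun x hx => h x ?_
      rw [Finset.mem_biUnion] at hx ⊢
      obtain ⟨w, hw, hxw⟩ := hx
      refine ⟨w, ?_, hxw⟩
      rw [hWdef, Finset.mem_filter]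
      rw [anc, Finset.mem_filter] at hw
      exact ⟨Finset.mem_univ _, s, hs, hw.2⟩
    constructor
    · intro hall s hs; rw [← hsols s hs]; exact hall s hs
    · intro hall s hs; rw [hsols s hs]; exact hall s hs
  have hev : ∀ u : U → Bool, (∀ s ∈ ({v} : Set V) ∪ S, sol u s = f s) ↔
      ((M.F v (fun p => f p.1) (fun e => u e.1) = f v) ∧ (∀ s ∈ S, sol u s = f s)) := by
    intro u
    constructor
    · intro h
      have hψ : ∀ s ∈ S, sol u s = f s := fun s hs => h s (Or.inr hs)
      refine ⟨?_, hψ⟩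
      have hv : sol u v = f v := h v (Or.inl rfl)
      rw [hsol u v] at hv
      have hp : (fun p : {p // p ∈ M.Pa v} => sol u p.1) = fun p => f p.1 :=
        funext fun p => hψ p.1 (hPa p.1 p.2)
      rwa [hp] at hv
    · rintro ⟨h1, h2⟩ s hs
      rcases hs with hs | hs
      · have hsv : s = v := hs
        subst hsv
        rw [hsol u s]
        have hp : (fun p : {p // p ∈ M.Pa s} => sol u p.1) = fun p => f p.1 :=
          funext fun p => h2 p.1 (hPa p.1 p.2)
        rw [hp]
        exact h1
      · exact h2 s hs
  rw [margV_eq, margV_eq]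
  refine Eq.trans (Eq.trans ?_ (indep2 M π hπ1 hdisj hindep {v} W hdisjvW
      (fun u => M.F v (fun p => f p.1) (fun e => u e.1) = f v)
      (fun u => ∀ s ∈ S, sol u s = f s) hφdep hψdep)) ?_
  · exact Finset.sum_congr rfl fun u _ => ite_prop_irrel (hev u) (π u)
  · congr 1
    · unfold qfac
      exact Finset.sum_congr rfl fun u _ => ite_prop_irrel Iff.rfl (π u)
    · exact Finset.sum_congr rfl fun u _ => ite_prop_irrel Iff.rfl (π u)

theorem markovian_model_markov_aux {U V : Type}
    [Fintype U] [Fintype V] [DecidableEq U] [DecidableEq V]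
    (M : SCM U V) (hA : M.Acyclic)
    (π : (U → Bool) → ℝ) (hπ0 : ∀ u, 0 ≤ π u) (hπ1 : ∑ u : U → Bool, π u = 1)
    (hdisj : ∀ v w : V, v ≠ w → Disjoint (M.Err v) (M.Err w))
    (hindep : ∀ f : U → Bool,
      margU π (⋃ v : V, ↑(M.Err v)) f = ∏ v : V, margU π ↑(M.Err v) f)
    (sol : (U → Bool) → (V → Bool))
    (hsol : ∀ (u : U → Bool) (v : V),
      sol u v = M.F v (fun p => sol u p.1) (fun e => u e.1)) :
    (∀ (v : V) (f : V → Bool),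
      let Z : Set V := ↑(M.Pa v)
      let Y : Set V := {w | w ≠ v ∧ w ∉ M.Pa v ∧
        ¬ Relation.TransGen (fun a b : V => a ∈ M.Pa b) v w}
      margV π sol ({v} ∪ Y ∪ Z) f * margV π sol Z f =
        margV π sol ({v} ∪ Z) f * margV π sol (Y ∪ Z) f) ∧
    (∀ a : V → Bool,
      pushV π sol a * ∏ v : V, margV π sol ↑(M.Pa v) a =
        ∏ v : V, margV π sol (insert v ↑(M.Pa v)) a) := by
  have hPaCond : ∀ v : V, ∀ s ∈ (↑(M.Pa v) : Set V),
      s ≠ v ∧ ¬ Relation.TransGen (fun a b : V => a ∈ M.Pa b) v s := by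
    intro v s hs
    have hs' : s ∈ M.Pa v := hs
    constructor
    · rintro rfl
      exact hA _ (Relation.TransGen.single hs')
    · intro htg
      exact hA v (htg.tail hs')
  constructor
  · intro v f
    show margV π sol ({v} ∪ {w | w ≠ v ∧ w ∉ M.Pa v ∧
          ¬ Relation.TransGen (fun a b : V => a ∈ M.Pa b) v w} ∪ ↑(M.Pa v)) f
        * margV π sol ↑(M.Pa v) f
      = margV π sol ({v} ∪ ↑(M.Pa v)) f
        * margV π sol ({w | w ≠ v ∧ w ∉ M.Pa v ∧
            ¬ Relation.TransGen (fun a b : V => a ∈ M.Pa b) v w} ∪ ↑(M.Pa v)) f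
    set Y : Set V := {w | w ≠ v ∧ w ∉ M.Pa v ∧
      ¬ Relation.TransGen (fun a b : V => a ∈ M.Pa b) v w} with hY
    have hYZcond : ∀ s ∈ Y ∪ (↑(M.Pa v) : Set V),
        s ≠ v ∧ ¬ Relation.TransGen (fun a b : V => a ∈ M.Pa b) v s := by
      intro s hs
      rcases hs with hs | hs
      · exact ⟨hs.1, hs.2.2⟩
      · exact hPaCond v s hs
    have h1 := condL M hA π hπ1 hdisj hindep sol hsol v (Y ∪ ↑(M.Pa v))
      (fun p hp => Or.inr (Finset.mem_coe.mpr hp)) hYZcond f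
    have h2 := condL M hA π hπ1 hdisj hindep sol hsol v ↑(M.Pa v)
      (fun p hp => Finset.mem_coe.mpr hp) (hPaCond v) f
    rw [Set.union_assoc, h1, h2]
    ring
  · intro a
    have h2 : ∀ v : V, margV π sol (insert v ↑(M.Pa v)) a
        = qfac M π v a * margV π sol ↑(M.Pa v) a := by
      intro v
      have := condL M hA π hπ1 hdisj hindep sol hsol v ↑(M.Pa v)
        (fun p hp => Finset.mem_coe.mpr hp) (hPaCond v) a
      rwa [Set.singleton_union] at this
    calc pushV π sol a * ∏ v : V, margV π sol ↑(M.Pa v) a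
        = (∏ v : V, qfac M π v a) * ∏ v : V, margV π sol ↑(M.Pa v) a := by
          rw [pushV_factor M hA π hπ1 hdisj hindep sol hsol a]
      _ = ∏ v : V, (qfac M π v a * margV π sol ↑(M.Pa v) a) := by
          rw [← Finset.prod_mul_distrib]
      _ = ∏ v : V, margV π sol (insert v ↑(M.Pa v)) a :=
          Finset.prod_congr rfl fun v _ => (h2 v).symm

/-- a Markovian probabilistic Boolean causal model (acyclic, with
pairwise disjoint, mutually independent error-term blocks) induces a distribution on
the internal variables that is Markov to its causal diagram, and in particular
factorizes as `π_M(a) = ∏_V π_M(a(V) | a|_{Pa(V)})` (stated in cross-multiplied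
form). -/
theorem markovian_model_markov {U V : Type}
    [Fintype U] [Fintype V] [DecidableEq U] [DecidableEq V]
    (M : SCM U V) (hA : M.Acyclic)
    (π : (U → Bool) → ℝ) (hπ0 : ∀ u, 0 ≤ π u) (hπ1 : ∑ u : U → Bool, π u = 1)
    (hdisj : ∀ v w : V, v ≠ w → Disjoint (M.Err v) (M.Err w))
    (hindep : ∀ f : U → Bool,
      margU π (⋃ v : V, ↑(M.Err v)) f = ∏ v : V, margU π ↑(M.Err v) f)
    (sol : (U → Bool) → (V → Bool))
    (hsol : ∀ (u : U → Bool) (v : V),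
      sol u v = M.F v (fun p => sol u p.1) (fun e => u e.1)) :
    (∀ (v : V) (f : V → Bool),
      let Z : Set V := ↑(M.Pa v)
      let Y : Set V := {w | w ≠ v ∧ w ∉ M.Pa v ∧
        ¬ Relation.TransGen (fun a b : V => a ∈ M.Pa b) v w}
      margV π sol ({v} ∪ Y ∪ Z) f * margV π sol Z f =
        margV π sol ({v} ∪ Z) f * margV π sol (Y ∪ Z) f) ∧
    (∀ a : V → Bool,
      pushV π sol a * ∏ v : V, margV π sol ↑(M.Pa v) a =
        ∏ v : V, margV π sol (insert v ↑(M.Pa v)) a) := by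
  exact markovian_model_markov_aux M hA π hπ0 hπ1 hdisj hindep sol hsol
end

section
/- For any acyclic probabilistic Boolean causal model M = (M, π) and any intervention i on internal variables, the maximum entropy causal systems CS(M_i) and CS(M)_i assume the same knowledge-why: their causal semantics assign equal probability to every world. -/
variable {α : Type}

open scoped Classical

/-- A LogLinear model: a finite set of weighted constraints. -/
abbrev LogLinear (α : Type) : Type := List (EReal × Form α)

/-- A possible world of a LogLinear model. -/
def LLPossible (Φ : LogLinear α) (ω : α → Bool) : Prop :=
  ∀ c ∈ Φ, (c.1 = ⊤ → c.2.eval ω = true) ∧ (c.1 = ⊥ → c.2.eval ω = false)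

/-- LogLinear weight of a world. -/
noncomputable def LLWeight (Φ : LogLinear α) (ω : α → Bool) : ℝ :=
  if LLPossible Φ ω then
    (Φ.map (fun c =>
      if c.1 ≠ ⊤ ∧ c.1 ≠ ⊥ ∧ c.2.eval ω = true then Real.exp c.1.toReal else 1)).prod
  else 0

variable [Fintype α]

/-- LogLinear weight of an event. -/
noncomputable def LLWSet (Φ : LogLinear α) (A : Set (α → Bool)) : ℝ :=
  ∑ ω : α → Bool, if ω ∈ A then LLWeight Φ ω else 0

/-- Probability of an event under a LogLinear model. -/
noncomputable def LLPr (Φ : LogLinear α) (A : Set (α → Bool)) : ℝ :=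
  LLWSet Φ A / LLWSet Φ Set.univ

/-- Conditional probability of an event given another under a LogLinear model. -/
noncomputable def LLCond (Φ : LogLinear α) (A B : Set (α → Bool)) : ℝ :=
  LLWSet Φ (A ∩ B) / LLWSet Φ B

/-- The inverse of the extended sigmoid: `σ⁻¹(x) = ln (x / (1 - x))`, with
`σ⁻¹(1) = +∞` and `σ⁻¹(0) = −∞`. -/
noncomputable def invSigmoid (x : ℝ) : EReal :=
  if x = 1 then ⊤ else if x = 0 then ⊥ else ((Real.log (x / (1 - x)) : ℝ) : EReal)

/-- `occurs a φ`: the atom `a` occurs in the formula `φ`. -/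
def Form.occurs (a : α) : Form α → Prop
  | .atom b => a = b
  | .tru => False
  | .fls => False
  | .neg φ => φ.occurs a
  | .conj φ ψ => φ.occurs a ∨ ψ.occurs a
  | .disj φ ψ => φ.occurs a ∨ ψ.occurs a

/-- A maximum entropy causal system: weighted causal rules (weight, body, head
literal), external premises, and a superordinate science given by a LogLinear
model. (Observations are empty throughout this statement.) -/
structure MECS (α : Type) [Fintype α] [DecidableEq α] where
  Θ : List (EReal × Form α × (α × Bool))
  E : Finset (α × Bool)
  sci : LogLinear α

variable [DecidableEq α]

namespace MECS

variable (CS : MECS α)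

/-- The pure external premises: atoms `p` with both `p, ¬p ∈ E`. -/
noncomputable def pure : Finset α :=
  Finset.univ.filter (fun p => (p, true) ∈ CS.E ∧ (p, false) ∈ CS.E)

/-- The parents of `p` in the causal structure of the explanatory content: the atoms
occurring in bodies of rules with head atom `p`. -/
def paSet (p : α) : Set α :=
  {q | ∃ r ∈ CS.Θ, r.2.2.1 = p ∧ r.2.1.occurs q}

/-- The LogLinear model `constraint(Θ|p)` of the constraint contents of the rules
with head atom `p`. -/
def componentLL (p : α) : LogLinear α :=
  (CS.Θ.filter (fun r => decide (r.2.2.1 = p))).map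
    (fun r => (r.1, r.2.1.impl (litForm r.2.2)))

/-- The event `sufficient(CS^p)`: worlds in which the value of `p` is explainable,
either by an external premise or by a rule with a true body. -/
def suffEvent (p : α) : Set (α → Bool) :=
  {ω | (ω p = true → ((p, true) ∈ CS.E ∨
          ∃ r ∈ CS.Θ, r.2.2 = (p, true) ∧ r.2.1.eval ω = true)) ∧
       (ω p = false → ((p, false) ∈ CS.E ∨
          ∃ r ∈ CS.Θ, r.2.2 = (p, false) ∧ r.2.1.eval ω = true))}

/-- The demonstration probability `π^why(p = ω(p) | pa(p), sufficient(CS^p))`. -/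
noncomputable def piWhy (p : α) (ω : α → Bool) : ℝ :=
  LLCond (CS.componentLL p) {ω' | ω' p = ω p}
    ({ω' | ∀ q ∈ CS.paSet p, ω' q = ω q} ∩ CS.suffEvent p)

/-- The causal semantics: the Bayesian-network distribution over the (singleton)
components of the causal structure, with the pure external premises jointly
distributed according to the superordinate science `Σ`. -/
noncomputable def piCausal (ω : α → Bool) : ℝ :=
  LLPr CS.sci {ω' | ∀ s ∈ CS.pure, ω' s = ω s} *
    ∏ p ∈ Finset.univ.filter (fun p => p ∉ CS.pure), CS.piWhy p ω

end MECS

/-- A Boolean structural causal model presented propositionally. -/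
structure PSCM (U V : Type) where
  F : V → Form (U ⊕ V)

/-- `M` is acyclic: the causal diagram (edge `p → q` iff `p` occurs in `F q`) has no
directed cycles. -/
def PSCM.Acyclic {U V : Type} (M : PSCM U V) : Prop :=
  ∀ v : V, ¬ Relation.TransGen (fun a b : V => (M.F b).occurs (Sum.inr a)) v v

/-- The modified model `M_i`. -/
def PSCM.intervene {U V : Type} (M : PSCM U V) (i : V → Option Bool) : PSCM U V where
  F := fun v =>
    match i v with
    | some true => Form.tru
    | some false => Form.fls
    | none => M.F v

variable {U V : Type} [Fintype U] [Fintype V] [DecidableEq U] [DecidableEq V]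

/-- The conjunction of literals describing a situation `u`. -/
noncomputable def situForm (u : U → Bool) : Form (U ⊕ V) :=
  conjList ((Finset.univ : Finset U).toList.map (fun x => litForm (Sum.inl x, u x)))

/-- The Bochman transformation of the probabilistic causal model `(M, π)`:
`Θ = {(+∞, F_V ⇒ V)}`, `E = U ∪ {¬W : W ∈ U ∪ V}` and
`Σ = {(ln π(s), ⋀ s) : s a situation}`. -/
noncomputable def PSCM.bochmanME (M : PSCM U V) (π : (U → Bool) → ℝ) : MECS (U ⊕ V) where
  Θ := (Finset.univ : Finset V).toList.map
    (fun v => ((⊤ : EReal), M.F v, (Sum.inr v, true)))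
  E := Finset.univ.filter
    (fun l : (U ⊕ V) × Bool => (∃ u : U, l = (Sum.inl u, true)) ∨ l.2 = false)
  sci := (Finset.univ : Finset (U → Bool)).toList.map
    (fun u => (if π u = 0 then (⊥ : EReal) else ((Real.log (π u) : ℝ) : EReal),
      situForm (V := V) u))

/-- The modified maximum entropy causal system `CS_i`: remove the weighted rules with
intervened heads, remove the external premises on intervened atoms, and add the hard
rules `(+∞, ⊤ ⇒ l)` for the literals `l` set by `i`. -/
noncomputable def MECS.intervene (CS : MECS (U ⊕ V)) (i : V → Option Bool) :
    MECS (U ⊕ V) where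
  Θ := CS.Θ.filter (fun r => decide (∀ v : V, r.2.2.1 = Sum.inr v → i v = none)) ++
    (Finset.univ : Finset V).toList.filterMap
      (fun v => (i v).map (fun b => ((⊤ : EReal), Form.tru, ((Sum.inr v : U ⊕ V), b))))
  E := CS.E.filter (fun l => ∀ v : V, l.1 = Sum.inr v → i v = none)
  sci := CS.sci


/-! ### Auxiliary lemmas -/

lemma list_filter_single {β : Type*} (p : β → Bool) (v : β) (L : List β)
    (hv : v ∈ L) (hnd : L.Nodup) (h : ∀ v' ∈ L, (p v' = true ↔ v' = v)) :
    L.filter p = [v] := by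
  induction L with
  | nil => cases hv
  | cons a L ih =>
    rw [List.filter_cons]
    rcases List.mem_cons.mp hv with rfl | hv'
    · rw [if_pos ((h v (.head _)).mpr rfl)]
      have hnil : L.filter p = [] := List.filter_eq_nil_iff.mpr (fun x hx hpx =>
        (List.nodup_cons.mp hnd).1 (((h x (.tail _ hx)).mp hpx) ▸ hx))
      simp [hnil]
    · have ha : ¬ p a = true := by
        intro hpa
        have : a = v := (h a (.head _)).mp hpa
        exact (List.nodup_cons.mp hnd).1 (this ▸ hv')
      rw [if_neg ha]
      exact ih hv' (List.nodup_cons.mp hnd).2 (fun v' hv'' => h v' (.tail _ hv''))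

lemma list_filterMap_single {β γ : Type*} (h : β → Option γ) (v : β) (c : γ)
    (L : List β) (hv : v ∈ L) (hnd : L.Nodup) (hc : h v = some c)
    (hother : ∀ v' ∈ L, v' ≠ v → h v' = none) :
    L.filterMap h = [c] := by
  induction L with
  | nil => cases hv
  | cons a L ih =>
    rw [List.filterMap_cons]
    rcases List.mem_cons.mp hv with rfl | hv'
    · rw [hc]
      have hnil : L.filterMap h = [] := List.filterMap_eq_nil_iff.mpr (fun x hx =>
        hother x (.tail _ hx) (fun he => (List.nodup_cons.mp hnd).1 (he ▸ hx)))
      simp [hnil]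
    · have ha : h a = none := hother a (.head _) (fun he =>
        (List.nodup_cons.mp hnd).1 (he ▸ hv'))
      rw [ha]
      exact ih hv' (List.nodup_cons.mp hnd).2 (fun v' hv'' => hother v' (.tail _ hv''))

lemma list_filterMap_nil {β γ : Type*} (h : β → Option γ) (L : List β)
    (hall : ∀ v' ∈ L, h v' = none) : L.filterMap h = [] :=
  List.filterMap_eq_nil_iff.mpr hall

section Comp
variable (M : PSCM U V) (π : (U → Bool) → ℝ) (i : V → Option Bool) (v : V)

lemma componentLL_bochman :
    (M.bochmanME π).componentLL (Sum.inr v) =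
      [((⊤ : EReal), (M.F v).impl (litForm (Sum.inr v, true)))] := by
  unfold MECS.componentLL PSCM.bochmanME
  rw [List.filter_map]
  have h1 : (Finset.univ : Finset V).toList.filter
      ((fun (r : EReal × Form (U ⊕ V) × ((U ⊕ V) × Bool)) => decide (r.2.2.1 = Sum.inr v)) ∘
        (fun v' => ((⊤ : EReal), M.F v', ((Sum.inr v' : U ⊕ V), true)))) = [v] := by
    apply list_filter_single _ v _ (by simp) (Finset.nodup_toList _)
    intro v' _
    simp
  rw [h1]
  simp

lemma componentLL_intervened_none (hi : i v = none) :
    ((M.bochmanME π).intervene i).componentLL (Sum.inr v) =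
      [((⊤ : EReal), (M.F v).impl (litForm (Sum.inr v, true)))] := by
  unfold MECS.componentLL MECS.intervene PSCM.bochmanME
  rw [List.filter_append, List.filter_filter, List.filter_map]
  have h1 : (Finset.univ : Finset V).toList.filter
      ((fun (r : EReal × Form (U ⊕ V) × ((U ⊕ V) × Bool)) =>
          decide (r.2.2.1 = Sum.inr v) && decide (∀ w : V, r.2.2.1 = Sum.inr w → i w = none)) ∘
        (fun v' => ((⊤ : EReal), M.F v', ((Sum.inr v' : U ⊕ V), true)))) = [v] := by
    apply list_filter_single _ v _ (by simp) (Finset.nodup_toList _)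
    intro v' _
    simp only [Function.comp_apply, Bool.and_eq_true, decide_eq_true_eq]
    constructor
    · rintro ⟨h, _⟩
      exact Sum.inr.inj h
    · rintro rfl
      refine ⟨rfl, ?_⟩
      rintro w hw
      rw [← Sum.inr.inj hw]; exact hi
  rw [h1, List.filter_filterMap]
  have h2 : (Finset.univ : Finset V).toList.filterMap
      (fun v' => Option.filter (fun (r : EReal × Form (U ⊕ V) × ((U ⊕ V) × Bool)) =>
          decide (r.2.2.1 = Sum.inr v))
        ((i v').map (fun b => ((⊤ : EReal), Form.tru, ((Sum.inr v' : U ⊕ V), b))))) = [] := by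
    apply list_filterMap_nil
    intro v' _
    cases hiv' : i v' with
    | none => simp
    | some b =>
      simp only [Option.map_some, Option.filter]
      have : ¬ ((Sum.inr v' : U ⊕ V) = Sum.inr v) := by
        rintro h
        rw [Sum.inr.inj h] at hiv'
        rw [hi] at hiv'; cases hiv'
      simp [this]
  rw [h2]
  simp

lemma componentLL_intervened_some (b : Bool) (hi : i v = some b) :
    ((M.bochmanME π).intervene i).componentLL (Sum.inr v) =
      [((⊤ : EReal), Form.tru.impl (litForm (Sum.inr v, b)))] := by
  unfold MECS.componentLL MECS.intervene PSCM.bochmanME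
  rw [List.filter_append, List.filter_filter, List.filter_map]
  have h1 : (Finset.univ : Finset V).toList.filter
      ((fun (r : EReal × Form (U ⊕ V) × ((U ⊕ V) × Bool)) =>
          decide (r.2.2.1 = Sum.inr v) && decide (∀ w : V, r.2.2.1 = Sum.inr w → i w = none)) ∘
        (fun v' => ((⊤ : EReal), M.F v', ((Sum.inr v' : U ⊕ V), true)))) = [] := by
    apply List.filter_eq_nil_iff.mpr
    intro v' _
    simp only [Function.comp_apply, Bool.and_eq_true, decide_eq_true_eq, not_and]
    rintro h hall
    have := hall v (h)
    rw [hi] at this; cases this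
  rw [h1, List.filter_filterMap]
  have h2 : (Finset.univ : Finset V).toList.filterMap
      (fun v' => Option.filter (fun (r : EReal × Form (U ⊕ V) × ((U ⊕ V) × Bool)) =>
          decide (r.2.2.1 = Sum.inr v))
        ((i v').map (fun b => ((⊤ : EReal), Form.tru, ((Sum.inr v' : U ⊕ V), b))))) =
      [((⊤ : EReal), Form.tru, ((Sum.inr v : U ⊕ V), b))] := by
    apply list_filterMap_single _ v _ _ (by simp) (Finset.nodup_toList _)
    · rw [hi]
      simp [Option.filter]
    · intro v' _ hne
      cases hiv' : i v' with
      | none => simp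
      | some b' =>
        simp only [Option.map_some, Option.filter]
        have : ¬ ((Sum.inr v' : U ⊕ V) = Sum.inr v) := fun h => hne (Sum.inr.inj h)
        simp [this]
  rw [h2]
  simp

lemma mem_E_bochman (l : (U ⊕ V) × Bool) :
    l ∈ (M.bochmanME π).E ↔ ((∃ u, l = (Sum.inl u, true)) ∨ l.2 = false) := by
  simp [PSCM.bochmanME]

lemma mem_E_intervened (l : (U ⊕ V) × Bool) :
    l ∈ ((M.bochmanME π).intervene i).E ↔
      (((∃ u, l = (Sum.inl u, true)) ∨ l.2 = false) ∧
        ∀ w, l.1 = Sum.inr w → i w = none) := by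
  simp [PSCM.bochmanME, MECS.intervene]

lemma mem_Th_bochman (M' : PSCM U V) (r : EReal × Form (U ⊕ V) × ((U ⊕ V) × Bool)) :
    r ∈ (M'.bochmanME π).Θ ↔
      ∃ v', r = ((⊤ : EReal), M'.F v', ((Sum.inr v' : U ⊕ V), true)) := by
  simp only [PSCM.bochmanME, List.mem_map, Finset.mem_toList, Finset.mem_univ, true_and]
  constructor
  · rintro ⟨v', rfl⟩; exact ⟨v', rfl⟩
  · rintro ⟨v', rfl⟩; exact ⟨v', rfl⟩

lemma mem_Th_intervened (r : EReal × Form (U ⊕ V) × ((U ⊕ V) × Bool)) :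
    r ∈ ((M.bochmanME π).intervene i).Θ ↔
      ((∃ v', i v' = none ∧ r = ((⊤ : EReal), M.F v', ((Sum.inr v' : U ⊕ V), true))) ∨
       (∃ v' b, i v' = some b ∧ r = ((⊤ : EReal), Form.tru, ((Sum.inr v' : U ⊕ V), b)))) := by
  simp only [MECS.intervene, PSCM.bochmanME, List.mem_append, List.mem_filter,
    List.mem_map, List.mem_filterMap, Finset.mem_toList, Finset.mem_univ, true_and,
    Option.map_eq_some_iff, decide_eq_true_eq]
  constructor
  · rintro (⟨⟨v', rfl⟩, hkeep⟩ | ⟨v', b', hiv', rfl⟩)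
    · exact Or.inl ⟨v', hkeep v' rfl, rfl⟩
    · exact Or.inr ⟨v', b', hiv', rfl⟩
  · rintro (⟨v', hv', rfl⟩ | ⟨v', b', hiv', rfl⟩)
    · refine Or.inl ⟨⟨v', rfl⟩, ?_⟩
      rintro w hw
      rw [← Sum.inr.inj hw]; exact hv'
    · exact Or.inr ⟨v', b', hiv', rfl⟩

lemma paSet_bochman (M' : PSCM U V) :
    (M'.bochmanME π).paSet (Sum.inr v) = {q | (M'.F v).occurs q} := by
  ext q
  simp only [MECS.paSet, Set.mem_setOf_eq]
  constructor
  · rintro ⟨r, hr, hhead, hocc⟩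
    rw [mem_Th_bochman] at hr
    obtain ⟨v', rfl⟩ := hr
    have hv : v' = v := Sum.inr.inj hhead
    subst hv
    exact hocc
  · intro h
    exact ⟨_, (mem_Th_bochman π _ _).mpr ⟨v, rfl⟩, rfl, h⟩

lemma paSet_intervened_none (hi : i v = none) :
    ((M.bochmanME π).intervene i).paSet (Sum.inr v) = {q | (M.F v).occurs q} := by
  ext q
  simp only [MECS.paSet, Set.mem_setOf_eq]
  constructor
  · rintro ⟨r, hr, hhead, hocc⟩
    rw [mem_Th_intervened] at hr
    rcases hr with ⟨v', hv', rfl⟩ | ⟨v', b', hiv', rfl⟩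
    · have hv : v' = v := Sum.inr.inj hhead
      subst hv
      exact hocc
    · exact hocc.elim
  · intro h
    exact ⟨_, (mem_Th_intervened M π i _).mpr (Or.inl ⟨v, hi, rfl⟩), rfl, h⟩

lemma paSet_intervened_some (b : Bool) (hi : i v = some b) :
    ((M.bochmanME π).intervene i).paSet (Sum.inr v) = ∅ := by
  ext q
  simp only [MECS.paSet, Set.mem_setOf_eq, Set.mem_empty_iff_false, iff_false]
  rintro ⟨r, hr, hhead, hocc⟩
  rw [mem_Th_intervened] at hr
  rcases hr with ⟨v', hv', rfl⟩ | ⟨v', b', hiv', rfl⟩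
  · have hv : v' = v := Sum.inr.inj hhead
    subst hv
    rw [hi] at hv'; cases hv'
  · exact hocc.elim

lemma suff_bochman (M' : PSCM U V) :
    (M'.bochmanME π).suffEvent (Sum.inr v) =
      {ω | ω (Sum.inr v) = true → (M'.F v).eval ω = true} := by
  ext ω
  simp only [MECS.suffEvent, Set.mem_setOf_eq]
  constructor
  · rintro ⟨h1, -⟩ ht
    rcases h1 ht with hE | ⟨r, hr, hhead, hev⟩
    · rw [mem_E_bochman] at hE
      rcases hE with ⟨u, hu⟩ | hu <;> simp at hu
    · rw [mem_Th_bochman] at hr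
      obtain ⟨v', rfl⟩ := hr
      simp only [Prod.mk.injEq, Sum.inr.injEq] at hhead
      obtain ⟨hv, -⟩ := hhead
      subst hv
      exact hev
  · intro h
    constructor
    · intro ht
      exact Or.inr ⟨_, (mem_Th_bochman π _ _).mpr ⟨v, rfl⟩, rfl, h ht⟩
    · intro _
      exact Or.inl ((mem_E_bochman M' π _).mpr (Or.inr rfl))

lemma suff_intervened_none (hi : i v = none) :
    ((M.bochmanME π).intervene i).suffEvent (Sum.inr v) =
      {ω | ω (Sum.inr v) = true → (M.F v).eval ω = true} := by
  ext ω
  simp only [MECS.suffEvent, Set.mem_setOf_eq]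
  constructor
  · rintro ⟨h1, -⟩ ht
    rcases h1 ht with hE | ⟨r, hr, hhead, hev⟩
    · rw [mem_E_intervened] at hE
      rcases hE with ⟨⟨u, hu⟩ | hu, -⟩ <;> simp at hu
    · rw [mem_Th_intervened] at hr
      rcases hr with ⟨v', hv', rfl⟩ | ⟨v', b', hiv', rfl⟩
      · simp only [Prod.mk.injEq, Sum.inr.injEq] at hhead
        obtain ⟨hv, -⟩ := hhead
        subst hv
        exact hev
      · simp only [Prod.mk.injEq, Sum.inr.injEq] at hhead
        obtain ⟨hv, -⟩ := hhead
        subst hv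
        rw [hi] at hiv'; cases hiv'
  · intro h
    constructor
    · intro ht
      exact Or.inr ⟨_, (mem_Th_intervened M π i _).mpr (Or.inl ⟨v, hi, rfl⟩), rfl, h ht⟩
    · intro _
      refine Or.inl ((mem_E_intervened M π i _).mpr ⟨Or.inr rfl, ?_⟩)
      rintro w hw
      rw [← Sum.inr.inj hw]; exact hi

lemma suff_intervened_some (b : Bool) (hi : i v = some b) :
    ((M.bochmanME π).intervene i).suffEvent (Sum.inr v) =
      {ω | ω (Sum.inr v) = b} := by
  ext ω
  simp only [MECS.suffEvent, Set.mem_setOf_eq]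
  have hE1 : ∀ b' : Bool,
      ¬ (((Sum.inr v : U ⊕ V), b') ∈ ((M.bochmanME π).intervene i).E) := by
    intro b' hmem
    rw [mem_E_intervened] at hmem
    have := hmem.2 v rfl
    rw [hi] at this; cases this
  have hrule : ∀ (b' : Bool) (r : EReal × Form (U ⊕ V) × ((U ⊕ V) × Bool)),
      r ∈ ((M.bochmanME π).intervene i).Θ → r.2.2 = ((Sum.inr v : U ⊕ V), b') →
      b' = b := by
    intro b' r hr hhead
    rw [mem_Th_intervened] at hr
    rcases hr with ⟨v', hv', rfl⟩ | ⟨v', b'', hiv', rfl⟩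
    · simp only [Prod.mk.injEq, Sum.inr.injEq] at hhead
      obtain ⟨hv, -⟩ := hhead
      subst hv
      rw [hi] at hv'; cases hv'
    · simp only [Prod.mk.injEq, Sum.inr.injEq] at hhead
      obtain ⟨hv, hb⟩ := hhead
      subst hv
      rw [hi] at hiv'
      rw [← hb, Option.some.inj hiv']
  have hmem : ((⊤ : EReal), Form.tru, ((Sum.inr v : U ⊕ V), b)) ∈
      ((M.bochmanME π).intervene i).Θ :=
    (mem_Th_intervened M π i _).mpr (Or.inr ⟨v, b, hi, rfl⟩)
  constructor
  · rintro ⟨h1, h2⟩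
    cases hb : ω (Sum.inr v) with
    | true =>
      rcases h1 hb with hE | ⟨r, hr, hhead, -⟩
      · exact absurd hE (hE1 true)
      · rw [hrule true r hr hhead]
    | false =>
      rcases h2 hb with hE | ⟨r, hr, hhead, -⟩
      · exact absurd hE (hE1 false)
      · rw [hrule false r hr hhead]
  · intro hb
    constructor
    · intro ht
      refine Or.inr ⟨_, hmem, ?_, rfl⟩
      rw [← hb, ht]
    · intro hf
      refine Or.inr ⟨_, hmem, ?_, rfl⟩
      rw [← hb, hf]

end Comp

lemma LLWeight_singleton_top {β : Type} (φ : Form β) (ω : β → Bool) :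
    LLWeight [((⊤ : EReal), φ)] ω = if φ.eval ω = true then 1 else 0 := by
  unfold LLWeight LLPossible
  by_cases h : φ.eval ω = true
  · rw [if_pos, if_pos h]
    · simp
    · intro c hc
      simp only [List.mem_singleton] at hc
      subst hc
      exact ⟨fun _ => h, fun hb => absurd hb.symm bot_ne_top⟩
  · rw [if_neg, if_neg h]
    intro hall
    exact h ((hall _ (List.mem_singleton_self _)).1 rfl)


section Main
variable (M : PSCM U V) (π : (U → Bool) → ℝ) (i : V → Option Bool)

lemma pure_eq :
    ((M.intervene i).bochmanME π).pure = ((M.bochmanME π).intervene i).pure := by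
  ext p
  simp only [MECS.pure, Finset.mem_filter, Finset.mem_univ, true_and,
    mem_E_bochman, mem_E_intervened]
  cases p with
  | inl u => simp
  | inr w => simp

lemma inl_mem_pure (u : U) :
    (Sum.inl u : U ⊕ V) ∈ ((M.intervene i).bochmanME π).pure := by
  simp only [MECS.pure, Finset.mem_filter, Finset.mem_univ, true_and, mem_E_bochman]
  simp

lemma piWhy_eq (v : V) (ω : U ⊕ V → Bool) :
    ((M.intervene i).bochmanME π).piWhy (Sum.inr v) ω =
    ((M.bochmanME π).intervene i).piWhy (Sum.inr v) ω := by
  cases hi : i v with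
  | none =>
    have hF : (M.intervene i).F v = M.F v := by simp [PSCM.intervene, hi]
    unfold MECS.piWhy
    rw [componentLL_bochman, componentLL_intervened_none M π i v hi,
        paSet_bochman, paSet_intervened_none M π i v hi,
        suff_bochman, suff_intervened_none M π i v hi, hF]
  | some b =>
    unfold MECS.piWhy
    rw [componentLL_bochman, componentLL_intervened_some M π i v b hi,
        paSet_bochman, paSet_intervened_some M π i v b hi,
        suff_bochman, suff_intervened_some M π i v b hi]
    cases b with
    | true =>
      have hF : (M.intervene i).F v = Form.tru := by simp [PSCM.intervene, hi]
      rw [hF]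
      unfold LLCond LLWSet
      congr 1 <;>
      · refine Finset.sum_congr rfl fun ω' _ => ?_
        simp only [LLWeight_singleton_top]
        by_cases hv' : ω' (Sum.inr v) = true <;>
          by_cases hA : ω' (Sum.inr v) = ω (Sum.inr v) <;>
            simp [Set.mem_inter_iff, Set.mem_setOf_eq, Form.occurs, Form.eval,
              Form.impl, litForm, hv', hA]
    | false =>
      have hF : (M.intervene i).F v = Form.fls := by simp [PSCM.intervene, hi]
      rw [hF]
      unfold LLCond LLWSet
      congr 1 <;>
      · refine Finset.sum_congr rfl fun ω' _ => ?_
        simp only [LLWeight_singleton_top]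
        by_cases hv' : ω' (Sum.inr v) = true <;>
          by_cases hA : ω' (Sum.inr v) = ω (Sum.inr v) <;>
            simp [Set.mem_inter_iff, Set.mem_setOf_eq, Form.occurs, Form.eval,
              Form.impl, litForm, hv', hA]

end Main

/-- for an acyclic probabilistic Boolean causal model `(M, π)` and any
intervention `i` on internal variables, the maximum entropy causal systems `CS(M_i)`
and `CS(M)_i` assume the same knowledge-why: their causal semantics assign equal
probability to every world. -/
theorem bochmanME_commutes_with_intervention
    (M : PSCM U V) (hA : M.Acyclic)
    (π : (U → Bool) → ℝ) (hπ0 : ∀ u, 0 ≤ π u) (hπ1 : ∑ u : U → Bool, π u = 1)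
    (i : V → Option Bool) :
    ∀ ω : U ⊕ V → Bool,
      ((M.intervene i).bochmanME π).piCausal ω =
        ((M.bochmanME π).intervene i).piCausal ω := by
  intro ω
  unfold MECS.piCausal
  rw [pure_eq M π i]
  congr 1
  refine Finset.prod_congr rfl fun p hp => ?_
  simp only [Finset.mem_filter] at hp
  cases p with
  | inl u =>
    exact absurd ((pure_eq M π i) ▸ inl_mem_pure M π i u) hp.2
  | inr v =>
    exact piWhy_eq M π i v ω
end
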